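/- arXiv:1212.0705 — 4 statements merged into one kernel-verified Lean document; each statement's English description precedes it below -/
import Mathlib

section
/- Let r₀ ∈ (0, ∞) and let J = (0, r₀) or J = (r₀, ∞). If h ∈ W^{1,2}_loc(J) satisfies ∫_J r [h'(r)² + h(r)²/r²] dr < ∞, then sup_J h² ≤ 2‖h‖_{L²(J; dr/r)}‖h'‖_{L²(J; r dr)} ≤ ∫_J r [h'(r)² + h(r)²/r²] dr, and h(r) → 0 as r → 0 (in the case J = (0, r₀)) respectively h(r) → 0 as r → ∞ (in the case J = (r₀, ∞)). -/
/-!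
Along `J` one has `(h²)' = 2hh'`, and Cauchy–Schwarz for the weights `1/r` and `r` followed by
AM–GM gives `∫_J |2hh'| ≤ 2‖h‖‖h'‖ ≤ ∫_J r (h'² + h²/r²)`. Hence `h²` converges at the free
endpoint of `J`, and the limit is `0` because `h²/r` is integrable there while `1/r` is not.
Writing `h(r)²` as the difference of `h²` at `r` and at the endpoint then bounds it by
`∫_J |2hh'|`.
-/

open MeasureTheory Set Filter
open scoped Topology Interval

theorem integral_abs_mul_le_sqrt_mul_sqrt {α : Type*} [MeasurableSpace α] {μ : Measure α}
    {u v : α → ℝ} (hu : MemLp u 2 μ) (hv : MemLp v 2 μ) :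
    ∫ a, |u a * v a| ∂μ ≤ √(∫ a, u a ^ 2 ∂μ) * √(∫ a, v a ^ 2 ∂μ) := by
  have two : ENNReal.ofReal 2 = 2 := by norm_num
  have holder := integral_mul_le_Lp_mul_Lq_of_nonneg Real.HolderConjugate.two_two
    (ae_of_all μ fun a => abs_nonneg (u a)) (ae_of_all μ fun a => abs_nonneg (v a))
    (two ▸ hu.abs) (two ▸ hv.abs)
  simpa only [abs_mul, Real.rpow_two, sq_abs, ← Real.sqrt_eq_rpow] using holder

theorem abs_sub_le_integral_abs_of_hasDerivAt {J : Set ℝ} (hJ : OrdConnected J) {f f' : ℝ → ℝ}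
    (hderiv : ∀ x ∈ J, HasDerivAt f (f' x) x) (hint : IntegrableOn f' J) {a b : ℝ}
    (ha : a ∈ J) (hb : b ∈ J) : |f b - f a| ≤ ∫ x in J, |f' x| := by
  have hsub : [[a, b]] ⊆ J := hJ.uIcc_subset ha hb
  rw [← intervalIntegral.integral_eq_sub_of_hasDerivAt (fun x hx => hderiv x (hsub hx))
    ((hint.mono_set hsub).intervalIntegrable)]
  calc |∫ x in a..b, f' x| ≤ ∫ x in Ι a b, |f' x| := by
        simpa only [Real.norm_eq_abs] using
          intervalIntegral.norm_integral_le_integral_norm_uIoc (f := f')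
    _ ≤ ∫ x in J, |f' x| :=
        setIntegral_mono_set hint.abs (ae_of_all _ fun x => abs_nonneg _)
          (uIoc_subset_uIcc.trans hsub).eventuallyLE

theorem exists_tendsto_nhdsGT_of_hasDerivAt_of_integrableOn_Ioo {E : Type*}
    [NormedAddCommGroup E] [NormedSpace ℝ E] [CompleteSpace E] {f f' : ℝ → E} {a b : ℝ}
    (hab : a < b)
    (hderiv : ∀ x ∈ Ioo a b, HasDerivAt f (f' x) x) (hint : IntegrableOn f' (Ioo a b)) :
    ∃ L, Tendsto f (𝓝[>] a) (𝓝 L) := by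
  obtain ⟨c, hac, hcb⟩ := exists_between hab
  have hint' : IntegrableOn f' [[a, c]] := by
    rw [uIcc_of_le hac.le, integrableOn_Icc_iff_integrableOn_Ioo]
    exact hint.mono_set (Ioo_subset_Ioo_right hcb.le)
  have hprim : Tendsto (fun x => ∫ t in x..c, f' t) (𝓝[>] a) (𝓝 (∫ t in a..c, f' t)) := by
    rw [← nhdsWithin_Ioo_eq_nhdsGT hac]
    exact ((intervalIntegral.continuousOn_primitive_interval_left hint') a left_mem_uIcc).mono
      (Ioo_subset_Icc_self.trans_eq (uIcc_of_le hac.le).symm)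
  refine ⟨f c - ∫ t in a..c, f' t, (hprim.const_sub (f c)).congr' ?_⟩
  filter_upwards [Ioo_mem_nhdsGT hac] with x hx
  have hsub : [[x, c]] ⊆ Ioo a b := by
    rw [uIcc_of_le hx.2.le]
    exact Icc_subset_Ioo hx.1 hcb
  rw [intervalIntegral.integral_eq_sub_of_hasDerivAt (fun y hy => hderiv y (hsub hy))
    ((hint.mono_set hsub).intervalIntegrable), sub_sub_cancel]

theorem eq_zero_of_tendsto_of_integrableOn_div {l : Filter ℝ} [NeBot l]
    [TendstoIxxClass Icc l l] (hlog : Tendsto (fun r => ‖Real.log r‖) l atTop) {J : Set ℝ}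
    (hJ : J ∈ l) {F : ℝ → ℝ} {L : ℝ} (hF : Tendsto F l (𝓝 L))
    (hint : IntegrableOn (fun r => F r / r) J) : L = 0 := by
  by_contra hL
  have hne : ∀ᶠ r in l, r ≠ 0 := by
    filter_upwards [hlog.eventually_gt_atTop 0] with r hr h0
    simp [h0] at hr
  have hL2 : 0 < |L| / 2 := half_pos (abs_pos.2 hL)
  have hbig : ∀ᶠ r in l, |L| / 2 ≤ |F r| := hF.abs.eventually (eventually_ge_nhds (by linarith))
  -- `log' = r⁻¹` is not integrable near `l`, but it would be `O(F r / r)` if `L ≠ 0`.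
  refine not_integrableOn_of_tendsto_norm_atTop_of_deriv_isBigO_filter l hJ
    (hne.mono fun r hr => Real.differentiableAt_log hr) hlog ?_ hint
  refine Asymptotics.IsBigO.of_bound (|L| / 2)⁻¹ ?_
  filter_upwards [hbig] with r hr
  calc ‖deriv Real.log r‖ = 1 * |r|⁻¹ := by simp
    _ ≤ (|L| / 2)⁻¹ * |F r| * |r|⁻¹ := by gcongr; exact (one_le_inv_mul₀ hL2).2 hr
    _ = (|L| / 2)⁻¹ * ‖F r / r‖ := by rw [Real.norm_eq_abs, abs_div]; ring

section Weighted

variable {J : Set ℝ} {h h' : ℝ → ℝ}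

theorem mul_add_sq_div_sq_eq (a b : ℝ) {r : ℝ} (hr : r ≠ 0) :
    r * (b ^ 2 + a ^ 2 / r ^ 2) = a ^ 2 / r + b ^ 2 * r := by
  field_simp
  ring

theorem integrableOn_sq_div_of_weighted (hJ : MeasurableSet J) (hJpos : J ⊆ Ioi 0)
    (hh : AEStronglyMeasurable h (volume.restrict J))
    (hInt : IntegrableOn (fun r => r * (h' r ^ 2 + h r ^ 2 / r ^ 2)) J) :
    IntegrableOn (fun r => h r ^ 2 / r) J := by
  refine hInt.mono' ((hh.pow 2).div₀ aestronglyMeasurable_id) ?_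
  filter_upwards [ae_restrict_mem hJ] with r hr
  have hr : 0 < r := hJpos hr
  rw [mul_add_sq_div_sq_eq _ _ hr.ne', Real.norm_of_nonneg (by positivity)]
  nlinarith [sq_nonneg (h' r)]

theorem integrableOn_sq_mul_of_weighted (hJ : MeasurableSet J) (hJpos : J ⊆ Ioi 0)
    (hh' : AEStronglyMeasurable h' (volume.restrict J))
    (hInt : IntegrableOn (fun r => r * (h' r ^ 2 + h r ^ 2 / r ^ 2)) J) :
    IntegrableOn (fun r => h' r ^ 2 * r) J := by
  refine hInt.mono' ((hh'.pow 2).mul aestronglyMeasurable_id) ?_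
  filter_upwards [ae_restrict_mem hJ] with r hr
  have hr : 0 < r := hJpos hr
  rw [mul_add_sq_div_sq_eq _ _ hr.ne', Real.norm_of_nonneg (by positivity)]
  have : 0 ≤ h r ^ 2 / r := by positivity
  linarith

theorem memLp_div_sqrt (hJ : MeasurableSet J) (hJpos : J ⊆ Ioi 0)
    (hh : AEStronglyMeasurable h (volume.restrict J))
    (hA : IntegrableOn (fun r => h r ^ 2 / r) J) :
    MemLp (fun r => h r / √r) 2 (volume.restrict J) := by
  have hm : AEStronglyMeasurable (fun r => h r / √r) (volume.restrict J) :=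
    hh.div₀ Real.continuous_sqrt.aestronglyMeasurable
  refine (memLp_two_iff_integrable_sq hm).2 ?_
  refine hA.congr_fun (fun r hr => ?_) hJ
  rw [div_pow, Real.sq_sqrt (hJpos hr).le]

theorem memLp_mul_sqrt (hJ : MeasurableSet J) (hJpos : J ⊆ Ioi 0)
    (hh' : AEStronglyMeasurable h' (volume.restrict J))
    (hB : IntegrableOn (fun r => h' r ^ 2 * r) J) :
    MemLp (fun r => h' r * √r) 2 (volume.restrict J) := by
  have hm : AEStronglyMeasurable (fun r => h' r * √r) (volume.restrict J) :=
    hh'.mul Real.continuous_sqrt.aestronglyMeasurable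
  refine (memLp_two_iff_integrable_sq hm).2 ?_
  refine hB.congr_fun (fun r hr => ?_) hJ
  rw [mul_pow, Real.sq_sqrt (hJpos hr).le]

theorem div_sqrt_mul_mul_sqrt (a b : ℝ) {r : ℝ} (hr : 0 < r) : a / √r * (b * √r) = a * b := by
  field_simp

theorem integrableOn_mul_of_weighted (hJ : MeasurableSet J) (hJpos : J ⊆ Ioi 0)
    (hh : AEStronglyMeasurable h (volume.restrict J))
    (hh' : AEStronglyMeasurable h' (volume.restrict J))
    (hA : IntegrableOn (fun r => h r ^ 2 / r) J) (hB : IntegrableOn (fun r => h' r ^ 2 * r) J) :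
    IntegrableOn (fun r => h r * h' r) J := by
  have : IntegrableOn (fun r => h r / √r * (h' r * √r)) J :=
    (memLp_div_sqrt hJ hJpos hh hA).integrable_mul (memLp_mul_sqrt hJ hJpos hh' hB)
  exact this.congr_fun (fun r hr => div_sqrt_mul_mul_sqrt _ _ (hJpos hr)) hJ

theorem integral_abs_mul_le_of_weighted (hJ : MeasurableSet J) (hJpos : J ⊆ Ioi 0)
    (hh : AEStronglyMeasurable h (volume.restrict J))
    (hh' : AEStronglyMeasurable h' (volume.restrict J))
    (hA : IntegrableOn (fun r => h r ^ 2 / r) J) (hB : IntegrableOn (fun r => h' r ^ 2 * r) J) :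
    ∫ r in J, |h r * h' r| ≤ √(∫ r in J, h r ^ 2 / r) * √(∫ r in J, h' r ^ 2 * r) := by
  have hu : ∫ r in J, (h r / √r) ^ 2 = ∫ r in J, h r ^ 2 / r :=
    setIntegral_congr_fun hJ fun r hr => by simp only [div_pow, Real.sq_sqrt (hJpos hr).le]
  have hv : ∫ r in J, (h' r * √r) ^ 2 = ∫ r in J, h' r ^ 2 * r :=
    setIntegral_congr_fun hJ fun r hr => by simp only [mul_pow, Real.sq_sqrt (hJpos hr).le]
  calc ∫ r in J, |h r * h' r| = ∫ r in J, |h r / √r * (h' r * √r)| :=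
        setIntegral_congr_fun hJ fun r hr => by simp only [div_sqrt_mul_mul_sqrt _ _ (hJpos hr)]
    _ ≤ _ := integral_abs_mul_le_sqrt_mul_sqrt (memLp_div_sqrt hJ hJpos hh hA)
        (memLp_mul_sqrt hJ hJpos hh' hB)
    _ = _ := by rw [hu, hv]

theorem two_mul_sqrt_mul_sqrt_le_integral_weighted (hJ : MeasurableSet J) (hJpos : J ⊆ Ioi 0)
    (hA : IntegrableOn (fun r => h r ^ 2 / r) J) (hB : IntegrableOn (fun r => h' r ^ 2 * r) J) :
    2 * √(∫ r in J, h r ^ 2 / r) * √(∫ r in J, h' r ^ 2 * r) ≤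
      ∫ r in J, r * (h' r ^ 2 + h r ^ 2 / r ^ 2) := by
  have hA0 : 0 ≤ ∫ r in J, h r ^ 2 / r :=
    setIntegral_nonneg hJ fun r hr => div_nonneg (sq_nonneg _) (hJpos hr).le
  have hB0 : 0 ≤ ∫ r in J, h' r ^ 2 * r :=
    setIntegral_nonneg hJ fun r hr => mul_nonneg (sq_nonneg _) (hJpos hr).le
  calc 2 * √(∫ r in J, h r ^ 2 / r) * √(∫ r in J, h' r ^ 2 * r)
      ≤ √(∫ r in J, h r ^ 2 / r) ^ 2 + √(∫ r in J, h' r ^ 2 * r) ^ 2 := two_mul_le_add_sq _ _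
    _ = ∫ r in J, (h r ^ 2 / r + h' r ^ 2 * r) := by
        rw [Real.sq_sqrt hA0, Real.sq_sqrt hB0, integral_add hA hB]
    _ = ∫ r in J, r * (h' r ^ 2 + h r ^ 2 / r ^ 2) :=
        setIntegral_congr_fun hJ fun r hr => (mul_add_sq_div_sq_eq _ _ (hJpos hr).ne').symm

theorem sq_le_and_tendsto_zero_of_integrableOn_weighted {l : Filter ℝ} [NeBot l]
    [TendstoIxxClass Icc l l] (hlog : Tendsto (fun r => ‖Real.log r‖) l atTop) (hJl : J ∈ l)
    (hJ : MeasurableSet J) (hJc : OrdConnected J) (hJpos : J ⊆ Ioi 0)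
    (hlim : ∀ f f' : ℝ → ℝ, (∀ x ∈ J, HasDerivAt f (f' x) x) → IntegrableOn f' J →
      ∃ L, Tendsto f l (𝓝 L))
    (hderiv : ∀ r ∈ J, HasDerivAt h (h' r) r)
    (hInt : IntegrableOn (fun r => r * (h' r ^ 2 + h r ^ 2 / r ^ 2)) J) :
    (∀ r ∈ J, h r ^ 2 ≤
      2 * √(∫ r in J, h r ^ 2 / r) * √(∫ r in J, h' r ^ 2 * r)) ∧
    2 * √(∫ r in J, h r ^ 2 / r) * √(∫ r in J, h' r ^ 2 * r) ≤
      ∫ r in J, r * (h' r ^ 2 + h r ^ 2 / r ^ 2) ∧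
    Tendsto h l (𝓝 0) := by
  have hh : AEStronglyMeasurable h (volume.restrict J) :=
    ContinuousOn.aestronglyMeasurable
      (fun r hr => (hderiv r hr).continuousAt.continuousWithinAt) hJ
  have hh' : AEStronglyMeasurable h' (volume.restrict J) :=
    (measurable_deriv h).aestronglyMeasurable.congr <|
      (ae_restrict_iff' hJ).2 (ae_of_all _ fun r hr => (hderiv r hr).deriv)
  have hA := integrableOn_sq_div_of_weighted hJ hJpos hh hInt
  have hB := integrableOn_sq_mul_of_weighted hJ hJpos hh' hInt
  have hsq : ∀ r ∈ J, HasDerivAt (fun r => h r ^ 2) (2 * (h r * h' r)) r := fun r hr => by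
    simpa [mul_assoc] using (hderiv r hr).fun_pow 2
  have hsq_int : IntegrableOn (fun r => 2 * (h r * h' r)) J :=
    (integrableOn_mul_of_weighted hJ hJpos hh hh' hA hB).const_mul 2
  have hvar : ∫ r in J, |2 * (h r * h' r)| ≤
      2 * √(∫ r in J, h r ^ 2 / r) * √(∫ r in J, h' r ^ 2 * r) := by
    simp only [abs_mul (2 : ℝ), abs_two, integral_const_mul, mul_assoc]
    gcongr
    exact integral_abs_mul_le_of_weighted hJ hJpos hh hh' hA hB
  obtain ⟨L, hL⟩ := hlim _ _ hsq hsq_int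
  obtain rfl : L = 0 := eq_zero_of_tendsto_of_integrableOn_div hlog hJl hL hA
  refine ⟨fun r hr => ?_, two_mul_sqrt_mul_sqrt_le_integral_weighted hJ hJpos hA hB, ?_⟩
  · have hdiff : ∀ᶠ s in l, h r ^ 2 - h s ^ 2 ≤
        2 * √(∫ r in J, h r ^ 2 / r) * √(∫ r in J, h' r ^ 2 * r) := by
      filter_upwards [hJl] with s hs
      exact (le_abs_self _).trans
        ((abs_sub_le_integral_abs_of_hasDerivAt hJc hsq hsq_int hs hr).trans hvar)
    simpa using le_of_tendsto (hL.const_sub (h r ^ 2)) hdiff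
  · rw [tendsto_zero_iff_abs_tendsto_zero]
    simpa [Function.comp_def, Real.sqrt_sq_eq_abs] using hL.sqrt

end Weighted

/-- Let `r₀ ∈ (0, ∞)` and `J = (0, r₀)` or `J = (r₀, ∞)`. If
`h ∈ W^{1,2}_loc(J)` satisfies `∫_J r [h'² + h²/r²] dr < ∞`, then
`sup_J h² ≤ 2‖h‖_{L²(J; dr/r)}‖h'‖_{L²(J; r dr)} ≤ ∫_J r [h'² + h²/r²] dr`
and `h(r) → 0` as `r → 0` (resp. `r → ∞`). -/
theorem stmt1 (r₀ : ℝ) (hr₀ : 0 < r₀) :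
    (∀ h h' : ℝ → ℝ,
      (∀ r ∈ Ioo 0 r₀, HasDerivAt h (h' r) r) →
      IntegrableOn (fun r => r * (h' r ^ 2 + h r ^ 2 / r ^ 2)) (Ioo 0 r₀) →
      (∀ r ∈ Ioo 0 r₀, h r ^ 2 ≤
          2 * Real.sqrt (∫ r in Ioo 0 r₀, h r ^ 2 / r) *
            Real.sqrt (∫ r in Ioo 0 r₀, h' r ^ 2 * r)) ∧
      2 * Real.sqrt (∫ r in Ioo 0 r₀, h r ^ 2 / r) *
          Real.sqrt (∫ r in Ioo 0 r₀, h' r ^ 2 * r) ≤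
        (∫ r in Ioo 0 r₀, r * (h' r ^ 2 + h r ^ 2 / r ^ 2)) ∧
      Tendsto h (nhdsWithin 0 (Ioi 0)) (nhds 0)) ∧
    (∀ h h' : ℝ → ℝ,
      (∀ r ∈ Ioi r₀, HasDerivAt h (h' r) r) →
      IntegrableOn (fun r => r * (h' r ^ 2 + h r ^ 2 / r ^ 2)) (Ioi r₀) →
      (∀ r ∈ Ioi r₀, h r ^ 2 ≤
          2 * Real.sqrt (∫ r in Ioi r₀, h r ^ 2 / r) *
            Real.sqrt (∫ r in Ioi r₀, h' r ^ 2 * r)) ∧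
      2 * Real.sqrt (∫ r in Ioi r₀, h r ^ 2 / r) *
          Real.sqrt (∫ r in Ioi r₀, h' r ^ 2 * r) ≤
        (∫ r in Ioi r₀, r * (h' r ^ 2 + h r ^ 2 / r ^ 2)) ∧
      Tendsto h atTop (nhds 0)) := by
  refine ⟨fun _ _ => ?_, fun _ _ => ?_⟩
  · exact sq_le_and_tendsto_zero_of_integrableOn_weighted
      (tendsto_abs_atBot_atTop.comp Real.tendsto_log_nhdsGT_zero) (Ioo_mem_nhdsGT hr₀)
      measurableSet_Ioo ordConnected_Ioo (fun _ hr => hr.1)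
      (fun _ _ => exists_tendsto_nhdsGT_of_hasDerivAt_of_integrableOn_Ioo hr₀)
  · exact sq_le_and_tendsto_zero_of_integrableOn_weighted
      (tendsto_norm_atTop_atTop.comp Real.tendsto_log_atTop) (Ioi_mem_atTop r₀)
      measurableSet_Ioi ordConnected_Ioi (fun _ hr => hr₀.trans hr)
      (fun _ _ hf hf' => ⟨_, tendsto_limUnder_of_hasDerivAt_of_integrableOn_Ioi hf hf'⟩)
end

section
/- Let α > 0 and define f(t) = 2 e^{−αt} sin(e^{t/2}) and g(t) = −e^{−αt} e^{−t/2} cos(e^{t/2}) for t ∈ (0, ∞). Then f ∈ L²((0, ∞)), g' ∈ L²((0, ∞)), and the function t ↦ e^{t} g(t) + f'(t) is in L²((0, ∞)); however, for every β ≥ 1/2 + α the function t ↦ e^{βt} g(t) is not in L²((0, ∞)). -/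
/-!
The three square-integrable functions are `O(e^{-αt})`: the only large term of `f'`, namely
`e^{-αt} e^{t/2} cos(e^{t/2})`, cancels exactly against `e^t g`. For `β ≥ 1/2 + α` one has
`(e^{βt} g)² ≥ cos²(e^{t/2})`, and the substitution `u = e^{t/2}` turns `∫₀^∞ cos²(e^{t/2}) dt`
into `2 ∫₁^∞ cos² u / u du`. This diverges: a shift by `π/2` bounds `sin² u / u` by a multiple of
`cos² u / u`, while `cos² + sin² = 1` and `1/u` is not integrable at infinity.
-/

open MeasureTheory Set Filter Real

lemma integrableOn_Ioi_sq_of_abs_le_mul_exp {F : ℝ → ℝ} {a c C : ℝ} (hc : 0 < c)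
    (hF : Measurable F) (hbound : ∀ t > a, |F t| ≤ C * exp (-c * t)) :
    IntegrableOn (fun t => F t ^ 2) (Ioi a) := by
  refine ((exp_neg_integrableOn_Ioi a (by positivity : 0 < 2 * c)).const_mul (C ^ 2)).mono'
    (hF.pow_const 2).aestronglyMeasurable ?_
  refine (ae_restrict_iff' measurableSet_Ioi).2 (Eventually.of_forall fun t ht => ?_)
  have hexp : exp (-(2 * c) * t) = exp (-c * t) ^ 2 := by rw [← exp_nat_mul]; ring_nf
  rw [norm_of_nonneg (sq_nonneg _), hexp, ← mul_pow, ← sq_abs]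
  exact pow_le_pow_left₀ (abs_nonneg _) (hbound t ht) 2

lemma abs_mul_exp_mul_le {c x s : ℝ} (hs : |s| ≤ 1) : |c * exp x * s| ≤ |c| * exp x := by
  rw [abs_mul, abs_mul, abs_exp]
  exact mul_le_of_le_one_right (by positivity) hs

lemma not_integrableOn_Ioi_cos_sq_div (a : ℝ) :
    ¬ IntegrableOn (fun u => cos u ^ 2 / u) (Ioi a) := by
  intro h
  set b := max a 1
  have hb : IntegrableOn (fun u => cos u ^ 2 / u) (Ioi b) :=
    h.mono_set (Ioi_subset_Ioi (le_max_left _ _))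
  have hshift : IntegrableOn (fun u => cos (u + π / 2) ^ 2 / (u + π / 2)) (Ioi b) := by
    have := (measurePreserving_add_right volume (π / 2)).integrableOn_comp_preimage
      (measurableEmbedding_addRight (π / 2)) (f := fun u => cos u ^ 2 / u) (s := Ioi (b + π / 2))
    rw [preimage_add_const_Ioi, add_sub_cancel_right] at this
    exact this.2 (hb.mono_set (Ioi_subset_Ioi (by linarith [pi_pos])))
  have hsin : IntegrableOn (fun u => sin u ^ 2 / u) (Ioi b) := by
    refine (hshift.const_mul 3).mono' (by fun_prop : Measurable _).aestronglyMeasurable ?_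
    refine (ae_restrict_iff' measurableSet_Ioi).2 (Eventually.of_forall fun u hu => ?_)
    have hu : 1 < u := (le_max_right a 1).trans_lt hu
    rw [cos_add_pi_div_two, neg_sq, norm_of_nonneg (by positivity), mul_div_assoc',
      div_le_div_iff₀ (by linarith) (by linarith [pi_pos])]
    nlinarith [pi_lt_four, sq_nonneg (sin u)]
  refine not_integrableOn_Ioi_inv (hb.add hsin |>.congr_fun (fun u _ => ?_) measurableSet_Ioi)
  rw [Pi.add_apply, ← add_div, cos_sq_add_sin_sq, one_div]

lemma not_integrableOn_Ioi_cos_sq_exp_half (a : ℝ) :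
    ¬ IntegrableOn (fun t => cos (exp (t / 2)) ^ 2) (Ioi a) := by
  intro h
  have hderiv : ∀ t ∈ Ioi a, HasDerivWithinAt (fun t => exp (t / 2)) (exp (t / 2) / 2) (Ioi a) t :=
    fun t _ => ((hasDerivAt_id t).div_const 2).exp.hasDerivWithinAt.congr_deriv
      (by simp [div_eq_mul_inv])
  have hinj : InjOn (fun t => exp (t / 2)) (Ioi a) := fun x _ y _ hxy => by simpa using hxy
  have himage : (fun t => exp (t / 2)) '' Ioi a = Ioi (exp (a / 2)) := by
    ext u
    refine ⟨fun ⟨t, ht, hu⟩ => hu ▸ exp_lt_exp.2 (by linarith [mem_Ioi.1 ht]), fun hu => ?_⟩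
    have hu0 : 0 < u := (exp_pos _).trans hu
    refine ⟨2 * log u, ?_, by simp [exp_log hu0]⟩
    have := (lt_log_iff_exp_lt hu0).2 hu
    simp only [mem_Ioi]; linarith
  refine not_integrableOn_Ioi_cos_sq_div (exp (a / 2)) ?_
  rw [← himage, integrableOn_image_iff_integrableOn_abs_deriv_smul measurableSet_Ioi hderiv hinj]
  refine IntegrableOn.congr_fun (h.div_const 2) (fun t _ => ?_) measurableSet_Ioi
  rw [smul_eq_mul, abs_of_pos (by positivity)]
  field_simp

lemma hasDerivAt_exp_mul_sin_exp_half (α t : ℝ) :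
    HasDerivAt (fun t => 2 * exp (-α * t) * sin (exp (t / 2)))
      (-(2 * α) * exp (-α * t) * sin (exp (t / 2))
        + exp (-α * t) * exp (t / 2) * cos (exp (t / 2))) t := by
  have := ((((hasDerivAt_id t).const_mul (-α)).exp).const_mul 2).mul
    ((hasDerivAt_id t).div_const 2).exp.sin
  refine this.congr_deriv ?_
  simp only [id]
  ring

lemma hasDerivAt_exp_mul_cos_exp_half (α t : ℝ) :
    HasDerivAt (fun t => -(exp (-α * t) * exp (-t / 2) * cos (exp (t / 2))))
      ((α + 1 / 2) * exp (-α * t) * (exp (-t / 2) * cos (exp (t / 2)))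
        + 1 / 2 * exp (-α * t) * sin (exp (t / 2))) t := by
  have := (((((hasDerivAt_id t).const_mul (-α)).exp).mul
    ((hasDerivAt_id t).neg.div_const 2).exp).mul ((hasDerivAt_id t).div_const 2).exp.cos).neg
  refine this.congr_deriv ?_
  have hexp : exp (-t / 2) * exp (t / 2) = 1 := by rw [← exp_add]; ring_nf; exact exp_zero
  simp only [id, Pi.mul_apply, Pi.neg_apply]
  linear_combination (exp (-α * t) * sin (exp (t / 2)) / 2) * hexp

lemma abs_deriv_exp_mul_cos_exp_half_le (α : ℝ) {t : ℝ} (ht : 0 ≤ t) :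
    |(α + 1 / 2) * exp (-α * t) * (exp (-t / 2) * cos (exp (t / 2)))
        + 1 / 2 * exp (-α * t) * sin (exp (t / 2))| ≤ (|α + 1 / 2| + |1 / 2|) * exp (-α * t) := by
  have hdecay : |exp (-t / 2) * cos (exp (t / 2))| ≤ 1 := by
    rw [abs_mul, abs_exp]
    exact mul_le_one₀ (exp_le_one_iff.2 (by linarith)) (abs_nonneg _) (abs_cos_le_one _)
  have h₁ := abs_mul_exp_mul_le (c := α + 1 / 2) (x := -α * t) hdecay
  have h₂ := abs_mul_exp_mul_le (c := 1 / 2) (x := -α * t) (abs_sin_le_one (exp (t / 2)))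
  linarith [abs_add_le ((α + 1 / 2) * exp (-α * t) * (exp (-t / 2) * cos (exp (t / 2))))
    (1 / 2 * exp (-α * t) * sin (exp (t / 2)))]

lemma exp_mul_neg_cos_add_deriv_sin_eq (α t : ℝ) :
    exp t * -(exp (-α * t) * exp (-t / 2) * cos (exp (t / 2)))
        + (-(2 * α) * exp (-α * t) * sin (exp (t / 2))
          + exp (-α * t) * exp (t / 2) * cos (exp (t / 2)))
      = -(2 * α) * exp (-α * t) * sin (exp (t / 2)) := by
  have hexp : exp t * exp (-t / 2) = exp (t / 2) := by rw [← exp_add]; ring_nf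
  linear_combination (-(exp (-α * t) * cos (exp (t / 2)))) * hexp

lemma cos_sq_exp_half_le_sq {α β t : ℝ} (hβ : 1 / 2 + α ≤ β) (ht : 0 ≤ t) :
    cos (exp (t / 2)) ^ 2 ≤
      (exp (β * t) * -(exp (-α * t) * exp (-t / 2) * cos (exp (t / 2)))) ^ 2 := by
  have hexp : exp (β * t) * (exp (-α * t) * exp (-t / 2)) = exp ((β - α - 1 / 2) * t) := by
    rw [← exp_add, ← exp_add]; ring_nf
  have hgrowth : 1 ≤ exp ((β - α - 1 / 2) * t) := one_le_exp (by nlinarith)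
  calc cos (exp (t / 2)) ^ 2 ≤ exp ((β - α - 1 / 2) * t) ^ 2 * cos (exp (t / 2)) ^ 2 :=
        le_mul_of_one_le_left (sq_nonneg _) (one_le_pow₀ hgrowth)
    _ = _ := by rw [← hexp]; ring

/-- sharpness of the interpolation inequality: for `α > 0`,
`f(t) = 2 e^{-αt} sin(e^{t/2})`, `g(t) = -e^{-αt} e^{-t/2} cos(e^{t/2})`,
the functions `f`, `g'` and `e^t g + f'` are square integrable on `(0, ∞)`,
but for every `β ≥ 1/2 + α`, the function `e^{βt} g` is not. -/
theorem stmt4 (α : ℝ) (hα : 0 < α) (f g : ℝ → ℝ)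
    (hf : f = fun t => 2 * Real.exp (-α * t) * Real.sin (Real.exp (t / 2)))
    (hg : g = fun t => -(Real.exp (-α * t) * Real.exp (-t / 2) * Real.cos (Real.exp (t / 2)))) :
    IntegrableOn (fun t => f t ^ 2) (Ioi 0) ∧
    IntegrableOn (fun t => deriv g t ^ 2) (Ioi 0) ∧
    IntegrableOn (fun t => (Real.exp t * g t + deriv f t) ^ 2) (Ioi 0) ∧
    ∀ β : ℝ, 1 / 2 + α ≤ β →
      ¬ IntegrableOn (fun t => (Real.exp (β * t) * g t) ^ 2) (Ioi 0) := by
  subst hf hg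
  refine ⟨?_, ?_, ?_, fun β hβ h => ?_⟩
  · exact integrableOn_Ioi_sq_of_abs_le_mul_exp hα (by fun_prop)
      fun t _ => abs_mul_exp_mul_le (abs_sin_le_one _)
  · refine integrableOn_Ioi_sq_of_abs_le_mul_exp (C := |α + 1 / 2| + |1 / 2|) hα
      (measurable_deriv _) fun t ht => ?_
    rw [(hasDerivAt_exp_mul_cos_exp_half α t).deriv]
    exact abs_deriv_exp_mul_cos_exp_half_le α ht.le
  · refine integrableOn_Ioi_sq_of_abs_le_mul_exp (C := |-(2 * α)|) hα
      ((by fun_prop : Measurable fun t => exp t * _).add (measurable_deriv _)) fun t _ => ?_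
    rw [(hasDerivAt_exp_mul_sin_exp_half α t).deriv, exp_mul_neg_cos_add_deriv_sin_eq]
    exact abs_mul_exp_mul_le (abs_sin_le_one _)
  · refine not_integrableOn_Ioi_cos_sq_exp_half 0
      (h.mono' (by fun_prop : Measurable _).aestronglyMeasurable ?_)
    refine (ae_restrict_iff' measurableSet_Ioi).2 (Eventually.of_forall fun t ht => ?_)
    rw [norm_of_nonneg (sq_nonneg _)]
    exact cos_sq_exp_half_le_sq hβ ht.le
end

section
/- For every (û, ŵ) ∈ 𝒲 the limit E(u, w) := lim_{R→∞} E^R(u, w) exists in ℝ ∪ {+∞}, and E(u, w) < ∞ if and only if E⁺(u, w) < ∞. -/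
open MeasureTheory Set Filter
open scoped ENNReal

/-- The elastic energy density `ρ^el(r) = (ŵ² − 1 + û')² + (û/r)² + ŵ'² + ŵ²/r²`,
in terms of the hatted variables `uh = û`, `wh = ŵ` and their derivatives. -/
noncomputable def rhoEl (uh wh uh' wh' : ℝ → ℝ) (r : ℝ) : ℝ :=
  (wh r ^ 2 - 1 + uh' r) ^ 2 + (uh r / r) ^ 2 + wh' r ^ 2 + wh r ^ 2 / r ^ 2

/-- `ψ` is a smooth cutoff function, `ψ = 0` near `0` and `ψ = 1` on `[1, ∞)`. -/
def IsCutoff (ψ : ℝ → ℝ) : Prop :=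
  ContDiff ℝ (⊤ : ℕ∞) ψ ∧ (∃ ε > (0 : ℝ), ∀ r ≤ ε, ψ r = 0) ∧ (∀ r ≥ (1 : ℝ), ψ r = 1)

/-- Membership in `𝒲`: `(û, ŵ) ∈ W^{1,2}_loc((0,∞), ℝ²)` (continuous representatives with
pointwise derivatives `uh', wh'`, locally square integrable) with `∫₀¹ r ρ^el(r) dr < ∞`. -/
def MemW (uh wh uh' wh' : ℝ → ℝ) : Prop :=
  (∀ r ∈ Ioi (0 : ℝ), HasDerivAt uh (uh' r) r) ∧
  (∀ r ∈ Ioi (0 : ℝ), HasDerivAt wh (wh' r) r) ∧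
  (∀ a b : ℝ, 0 < a → IntegrableOn (fun r => uh' r ^ 2 + wh' r ^ 2) (Ioo a b)) ∧
  IntegrableOn (fun r => r * rhoEl uh wh uh' wh' r) (Ioo 0 1)

/-- The renormalized energy `E^R(u, w) = ∫₀^R r (ρ^el(r) − ψ(r)²/r²) dr`. -/
noncomputable def ERen (ψ uh wh uh' wh' : ℝ → ℝ) (R : ℝ) : ℝ :=
  ∫ r in Ioo 0 R, r * (rhoEl uh wh uh' wh' r - ψ r ^ 2 / r ^ 2)

/-- The integrand of `E⁺(u, w; (1, R)) = ∫₁^R r [(2w + w² + u')² + u²/r² + w'²] dr`,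
expressed in the hatted variables using that `ψ ≡ 1` on `[1, ∞)`, so that there
`w = ŵ − 1`, `u = û − 1/(2r)`, `u' = û' + 1/(2r²)`, `w' = ŵ'` and
`2w + w² = ŵ² − 1`. -/
noncomputable def outerDen (uh wh uh' wh' : ℝ → ℝ) (r : ℝ) : ℝ :=
  r * ((wh r ^ 2 - 1 + uh' r + 1 / (2 * r ^ 2)) ^ 2 +
    ((uh r - 1 / (2 * r)) / r) ^ 2 + wh' r ^ 2)

/-- `E^{+,R}(u, w) = E⁺(u, w; (0,1)) + E⁺(u, w; (1,R))`. -/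
noncomputable def EPlusR (uh wh uh' wh' : ℝ → ℝ) (R : ℝ) : ℝ :=
  (∫ r in Ioo 0 1, r * rhoEl uh wh uh' wh' r) + ∫ r in Ioo 1 R, outerDen uh wh uh' wh' r

/-- `E⁺(u, w) = E⁺(u, w; (0,1)) + E⁺(u, w; (1,∞)) ∈ [0, ∞]`. -/
noncomputable def EPlusTop (uh wh uh' wh' : ℝ → ℝ) : ℝ≥0∞ :=
  ENNReal.ofReal (∫ r in Ioo 0 1, r * rhoEl uh wh uh' wh' r) +
    ∫⁻ r in Ioi 1, ENNReal.ofReal (outerDen uh wh uh' wh' r)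


namespace St9

variable {uh wh uh' wh' : ℝ → ℝ}

/-- `p = ŵ²−1+û'+1/(2r²)` -/
noncomputable def pf (wh uh' : ℝ → ℝ) (r : ℝ) : ℝ := wh r ^ 2 - 1 + uh' r + 1 / (2 * r ^ 2)
/-- `u = û − 1/(2r)` -/
noncomputable def uf (uh : ℝ → ℝ) (r : ℝ) : ℝ := uh r - 1 / (2 * r)
/-- boundary potential `φ = û/r − 1/(4r²)` -/
noncomputable def phi (uh : ℝ → ℝ) (r : ℝ) : ℝ := uh r / r - 1 / (4 * r ^ 2)
noncomputable def phid (uh uh' : ℝ → ℝ) (r : ℝ) : ℝ := uh' r / r - uh r / r ^ 2 + 1 / (2 * r ^ 3)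

lemma outerDen_eq (uh wh uh' wh' : ℝ → ℝ) (r : ℝ) :
    outerDen uh wh uh' wh' r
      = r * (pf wh uh' r ^ 2 + (uf uh r / r) ^ 2 + wh' r ^ 2) := rfl

lemma outerDen_nonneg (uh wh uh' wh' : ℝ → ℝ) {r : ℝ} (hr : 0 ≤ r) : 0 ≤ outerDen uh wh uh' wh' r := by
  rw [outerDen]; positivity

/-- the key algebraic identity on `[1,∞)` where `ψ = 1`. -/
lemma key_alg (uh wh uh' wh' : ℝ → ℝ) {r : ℝ} (hr : r ≠ 0) :
    r * (rhoEl uh wh uh' wh' r - 1 ^ 2 / r ^ 2)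
      = outerDen uh wh uh' wh' r - phid uh uh' r := by
  rw [rhoEl, outerDen, phid]
  field_simp
  ring

lemma hasDerivAt_phi {r : ℝ} (hr : 0 < r) (hd : HasDerivAt uh (uh' r) r) :
    HasDerivAt (phi uh) (phid uh uh' r) r := by
  have h1 : HasDerivAt (fun s : ℝ => uh s / s)
      ((uh' r * r - uh r * 1) / r ^ 2) r := hd.div (hasDerivAt_id r) hr.ne'
  have hden : HasDerivAt (fun s : ℝ => 4 * s ^ 2) (8 * r) r := by
    have := (hasDerivAt_pow 2 r).const_mul (4:ℝ)
    refine this.congr_deriv ?_; norm_num; ring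
  have h2 : HasDerivAt (fun s : ℝ => 1 / (4 * s ^ 2))
      ((0 * (4 * r ^ 2) - 1 * (8 * r)) / (4 * r ^ 2) ^ 2) r :=
    (hasDerivAt_const r (1:ℝ)).div hden (by positivity)
  have := h1.sub h2
  refine this.congr_deriv ?_
  rw [phid]
  field_simp
  ring

lemma hasDerivAt_uf {r : ℝ} (hr : 0 < r) (hd : HasDerivAt uh (uh' r) r) :
    HasDerivAt (uf uh) (uh' r + 1 / (2 * r ^ 2)) r := by
  have hden : HasDerivAt (fun s : ℝ => 2 * s) (2:ℝ) r := by
    simpa using (hasDerivAt_id r).const_mul (2:ℝ)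
  have h2 : HasDerivAt (fun s : ℝ => 1 / (2 * s))
      ((0 * (2 * r) - 1 * 2) / (2 * r) ^ 2) r :=
    (hasDerivAt_const r (1:ℝ)).div hden (by positivity)
  have := hd.sub h2
  refine this.congr_deriv ?_
  field_simp
  ring


variable {uh wh uh' wh' : ℝ → ℝ}

lemma contOn_uh (h : ∀ r ∈ Ioi (0:ℝ), HasDerivAt uh (uh' r) r) :
    ContinuousOn uh (Ioi 0) :=
  fun r hr => ((h r hr).continuousAt).continuousWithinAt

lemma aesm_of_contOn {f : ℝ → ℝ} (hf : ContinuousOn f (Ioi 0)) {s : Set ℝ}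
    (hs : s ⊆ Ioi 0) : AEStronglyMeasurable f (volume.restrict s) :=
  (hf.aestronglyMeasurable measurableSet_Ioi).mono_measure
    (Measure.restrict_mono hs le_rfl)

lemma aesm_uh' (h : ∀ r ∈ Ioi (0:ℝ), HasDerivAt uh (uh' r) r) {s : Set ℝ}
    (hs : s ⊆ Ioi 0) : AEStronglyMeasurable uh' (volume.restrict s) := by
  have h0 : AEStronglyMeasurable uh' (volume.restrict (Ioi 0)) := by
    refine (measurable_deriv uh).aestronglyMeasurable.congr ?_
    filter_upwards [ae_restrict_mem measurableSet_Ioi] with r hr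
    exact (h r hr).deriv
  exact h0.mono_measure (Measure.restrict_mono hs le_rfl)

/-- square-integrability of `uh'` on compact subintervals -/
lemma int_sq (hL2 : ∀ a b : ℝ, 0 < a → IntegrableOn (fun r => uh' r ^ 2 + wh' r ^ 2) (Ioo a b))
    (h : ∀ r ∈ Ioi (0:ℝ), HasDerivAt uh (uh' r) r) {a b : ℝ} (ha : 0 < a) :
    IntegrableOn (fun r => uh' r ^ 2) (Ioo a b) := by
  refine (hL2 a b ha).mono' ?_ ?_
  · have := aesm_uh' h (s := Ioo a b) (Ioo_subset_Ioi_self.trans (Ioi_subset_Ioi ha.le) |>.trans (by simp [Ioi]))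
    · exact (this.mul this).congr (by filter_upwards with r; simp [Pi.mul_apply, sq])
  · filter_upwards [ae_restrict_mem measurableSet_Ioo] with r _
    have := sq_nonneg (wh' r)
    simp only [Real.norm_eq_abs, abs_of_nonneg (sq_nonneg (uh' r))]
    nlinarith

lemma int_abs (hL2 : ∀ a b : ℝ, 0 < a → IntegrableOn (fun r => uh' r ^ 2 + wh' r ^ 2) (Ioo a b))
    (h : ∀ r ∈ Ioi (0:ℝ), HasDerivAt uh (uh' r) r) {a b : ℝ} (ha : 0 < a) :
    IntegrableOn uh' (Ioo a b) := by
  have hbound : IntegrableOn (fun r => (uh' r ^ 2 + wh' r ^ 2 + 1) / 2) (Ioo a b) := by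
    refine Integrable.div_const ?_ 2
    exact (hL2 a b ha).add (integrableOn_const measure_Ioo_lt_top.ne)
  refine hbound.mono' ?_ ?_
  · exact aesm_uh' h (fun r hr => lt_trans ha hr.1)
  · filter_upwards [ae_restrict_mem measurableSet_Ioo] with r _
    have h1 := sq_nonneg (|uh' r| - 1)
    have h2 := sq_nonneg (wh' r)
    rw [Real.norm_eq_abs]
    have : uh' r ^ 2 = |uh' r| ^ 2 := (sq_abs _).symm
    nlinarith [abs_nonneg (uh' r)]


section Chunk3
variable {uh wh uh' wh' : ℝ → ℝ}

/-- the "continuous part" of `pf`. -/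
noncomputable def cq (wh : ℝ → ℝ) (r : ℝ) : ℝ := wh r ^ 2 - 1 + 1 / (2 * r ^ 2)

lemma pf_eq (wh uh' : ℝ → ℝ) (r : ℝ) : pf wh uh' r = cq wh r + uh' r := by
  rw [pf, cq]; ring

lemma contOn_cq (h : ∀ r ∈ Ioi (0:ℝ), HasDerivAt wh (wh' r) r) :
    ContinuousOn (cq wh) (Ioi 0) := by
  have h1 : ContinuousOn wh (Ioi 0) := contOn_uh h
  have h2 : ContinuousOn (fun r : ℝ => 1 / (2 * r ^ 2)) (Ioi 0) := by
    refine ContinuousOn.div continuousOn_const (by fun_prop) ?_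
    intro r hr; have : (0:ℝ) < r := hr; positivity
  exact ((h1.pow 2).sub continuousOn_const).add h2

lemma contOn_uf (h : ∀ r ∈ Ioi (0:ℝ), HasDerivAt uh (uh' r) r) :
    ContinuousOn (uf uh) (Ioi 0) := by
  have h1 : ContinuousOn uh (Ioi 0) := contOn_uh h
  have h2 : ContinuousOn (fun r : ℝ => 1 / (2 * r)) (Ioi 0) := by
    refine ContinuousOn.div continuousOn_const (by fun_prop) ?_
    intro r hr; have : (0:ℝ) < r := hr; positivity
  exact h1.sub h2

lemma aem_of_memW (hW : MemW uh wh uh' wh') {s : Set ℝ} (hs : s ⊆ Ioi 0) :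
    AEMeasurable uh (volume.restrict s) ∧ AEMeasurable wh (volume.restrict s) ∧
    AEMeasurable uh' (volume.restrict s) ∧ AEMeasurable wh' (volume.restrict s) :=
  ⟨(aesm_of_contOn (contOn_uh hW.1) hs).aemeasurable,
   (aesm_of_contOn (contOn_uh hW.2.1) hs).aemeasurable,
   (aesm_uh' hW.1 hs).aemeasurable, (aesm_uh' hW.2.1 hs).aemeasurable⟩

lemma aesm_outerDen (hW : MemW uh wh uh' wh') {s : Set ℝ} (hs : s ⊆ Ioi 0) :
    AEStronglyMeasurable (outerDen uh wh uh' wh') (volume.restrict s) := by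
  obtain ⟨hu, hw, hu', hw'⟩ := aem_of_memW hW hs
  have hid : AEMeasurable (fun r : ℝ => r) (volume.restrict s) := aemeasurable_id
  have t2 : AEMeasurable (fun r => wh r ^ 2 - 1 + uh' r + 1 / (2 * r ^ 2)) (volume.restrict s) :=
    (((hw.pow_const 2).sub aemeasurable_const).add hu').add
      (aemeasurable_const.div (aemeasurable_const.mul (hid.pow_const 2)))
  have t4 : AEMeasurable (fun r => (uh r - 1 / (2 * r)) / r) (volume.restrict s) :=
    (hu.sub (aemeasurable_const.div (aemeasurable_const.mul hid))).div hid
  exact (hid.mul (((t2.pow_const 2).add (t4.pow_const 2)).add (hw'.pow_const 2))).aestronglyMeasurable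

lemma aesm_phid (hW : MemW uh wh uh' wh') {s : Set ℝ} (hs : s ⊆ Ioi 0) :
    AEStronglyMeasurable (phid uh uh') (volume.restrict s) := by
  obtain ⟨hu, _, hu', _⟩ := aem_of_memW hW hs
  have hid : AEMeasurable (fun r : ℝ => r) (volume.restrict s) := aemeasurable_id
  exact (((hu'.div hid).sub (hu.div (hid.pow_const 2))).add
    (aemeasurable_const.div (aemeasurable_const.mul (hid.pow_const 3)))).aestronglyMeasurable

lemma int_outerDen_Ioo (hW : MemW uh wh uh' wh') {R : ℝ} (hR : 1 ≤ R) :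
    IntegrableOn (outerDen uh wh uh' wh') (Ioo 1 R) := by
  have hsub : Ioo (1:ℝ) R ⊆ Ioi 0 := fun r hr => lt_trans one_pos hr.1
  have hc : ContinuousOn (fun r => r * (2 * cq wh r ^ 2 + (uf uh r / r) ^ 2)) (Icc 1 R) := by
    have hIcc : Icc (1:ℝ) R ⊆ Ioi 0 := fun r hr => lt_of_lt_of_le one_pos hr.1
    refine (continuousOn_id.mul ?_).mono hIcc
    refine (continuousOn_const.mul ((contOn_cq hW.2.1).pow 2)).add
      (((contOn_uf hW.1).div continuousOn_id (fun r hr => ne_of_gt hr)).pow 2)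
  obtain ⟨M, hM⟩ := isCompact_Icc.exists_bound_of_continuousOn hc
  have hbd : IntegrableOn (fun r => M + 2 * R * (uh' r ^ 2 + wh' r ^ 2)) (Ioo 1 R) := by
    exact (integrableOn_const measure_Ioo_lt_top.ne).add
      ((hW.2.2.1 1 R one_pos).const_mul (2 * R))
  refine hbd.mono' (aesm_outerDen hW hsub) ?_
  filter_upwards [ae_restrict_mem measurableSet_Ioo] with r hr
  have hr0 : (0:ℝ) < r := lt_trans one_pos hr.1
  have h1 : (1:ℝ) ≤ r := hr.1.le
  have h2 : r ≤ R := hr.2.le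
  have hMr := hM r ⟨h1, h2⟩
  rw [Real.norm_eq_abs, abs_of_nonneg (outerDen_nonneg uh wh uh' wh' hr0.le)]
  rw [outerDen_eq, pf_eq]
  have hnorm : r * (2 * cq wh r ^ 2 + (uf uh r / r) ^ 2) ≤ M := le_of_abs_le hMr
  have hR0 : (0:ℝ) ≤ R := le_trans zero_le_one (le_trans h1 h2)
  nlinarith [mul_nonneg hr0.le (sq_nonneg (cq wh r - uh' r)),
    mul_nonneg (sub_nonneg.2 h2) (sq_nonneg (uh' r)),
    mul_nonneg (sub_nonneg.2 h2) (sq_nonneg (wh' r)),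
    mul_nonneg hR0 (sq_nonneg (wh' r)), hnorm]

lemma int_phid_Ioo (hW : MemW uh wh uh' wh') {a b : ℝ} (ha : 0 < a) :
    IntegrableOn (phid uh uh') (Ioo a b) := by
  have hsub : Ioo a b ⊆ Ioi 0 := fun r hr => lt_trans ha hr.1
  have hc : ContinuousOn (fun r => |uh r / r ^ 2| + |1 / (2 * r ^ 3)| + 1 / a) (Icc a b) := by
    have hIcc : Icc a b ⊆ Ioi 0 := fun r hr => lt_of_lt_of_le ha hr.1
    have hpos : ∀ r ∈ Icc a b, (0:ℝ) < r := fun r hr => hIcc hr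
    have c1 : ContinuousOn (fun r : ℝ => uh r / r ^ 2) (Icc a b) :=
      ((contOn_uh hW.1).mono hIcc).div (continuousOn_id.pow 2)
        (fun r hr => by have := hpos r hr; positivity)
    have c2 : ContinuousOn (fun r : ℝ => 1 / (2 * r ^ 3)) (Icc a b) :=
      continuousOn_const.div (by fun_prop) (fun r hr => by have := hpos r hr; positivity)
    exact (c1.abs.add c2.abs).add continuousOn_const
  obtain ⟨M, hM⟩ := isCompact_Icc.exists_bound_of_continuousOn hc
  have hbd : IntegrableOn (fun r => (uh' r ^ 2 + wh' r ^ 2 + 1) / (2 * a) + M) (Ioo a b) := by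
    exact ((((hW.2.2.1 a b ha).add (integrableOn_const measure_Ioo_lt_top.ne)).div_const
      (2 * a)).add (integrableOn_const measure_Ioo_lt_top.ne))
  refine hbd.mono' (aesm_phid hW hsub) ?_
  filter_upwards [ae_restrict_mem measurableSet_Ioo] with r hr
  have hr0 : (0:ℝ) < r := lt_trans ha hr.1
  have har : a ≤ r := hr.1.le
  have hMr : |uh r / r ^ 2| + |1 / (2 * r ^ 3)| + 1 / a ≤ M :=
    le_of_abs_le (hM r ⟨hr.1.le, hr.2.le⟩)
  have hainv : (0:ℝ) ≤ 1 / a := le_of_lt (by positivity)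
  rw [Real.norm_eq_abs, phid]
  have e1 : |uh' r / r - uh r / r ^ 2 + 1 / (2 * r ^ 3)|
      ≤ |uh' r| / r + (|uh r / r ^ 2| + |1 / (2 * r ^ 3)|) := by
    calc |uh' r / r - uh r / r ^ 2 + 1 / (2 * r ^ 3)|
        ≤ |uh' r / r - uh r / r ^ 2| + |1 / (2 * r ^ 3)| := abs_add_le _ _
      _ ≤ |uh' r / r| + |uh r / r ^ 2| + |1 / (2 * r ^ 3)| := by
          have := abs_sub (uh' r / r) (uh r / r ^ 2); linarith
      _ = |uh' r| / r + (|uh r / r ^ 2| + |1 / (2 * r ^ 3)|) := by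
          rw [abs_div, abs_of_pos hr0]; ring
  have e2 : |uh' r| / r ≤ (uh' r ^ 2 + wh' r ^ 2 + 1) / (2 * a) := by
    rw [div_le_div_iff₀ hr0 (by positivity)]
    have h3 : 2 * |uh' r| ≤ uh' r ^ 2 + 1 := by nlinarith [sq_nonneg (|uh' r| - 1), sq_abs (uh' r)]
    nlinarith [abs_nonneg (uh' r), sq_nonneg (wh' r), sq_nonneg (uh' r)]
  linarith
end Chunk3

section Chunk4
variable {ψ uh wh uh' wh' : ℝ → ℝ}

lemma int_rpf2_Ioo (hW : MemW uh wh uh' wh') {R : ℝ} (hR : 1 ≤ R) :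
    IntegrableOn (fun r => r * pf wh uh' r ^ 2) (Ioo 1 R) := by
  have hsub : Ioo (1:ℝ) R ⊆ Ioi 0 := fun r hr => lt_trans one_pos hr.1
  refine (int_outerDen_Ioo hW hR).mono' ?_ ?_
  · obtain ⟨hu, hw, hu', hw'⟩ := aem_of_memW hW hsub
    have hid : AEMeasurable (fun r : ℝ => r) (volume.restrict (Ioo 1 R)) := aemeasurable_id
    have t2 : AEMeasurable (pf wh uh') (volume.restrict (Ioo 1 R)) :=
      (((hw.pow_const 2).sub aemeasurable_const).add hu').add
        (aemeasurable_const.div (aemeasurable_const.mul (hid.pow_const 2)))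
    exact (hid.mul (t2.pow_const 2)).aestronglyMeasurable
  · filter_upwards [ae_restrict_mem measurableSet_Ioo] with r hr
    have hr0 : (0:ℝ) < r := lt_trans one_pos hr.1
    rw [Real.norm_eq_abs, abs_of_nonneg (by positivity), outerDen_eq]
    nlinarith [mul_nonneg hr0.le (sq_nonneg (uf uh r / r)), mul_nonneg hr0.le (sq_nonneg (wh' r))]

lemma int_ru2_Ioo (hW : MemW uh wh uh' wh') {R : ℝ} (hR : 1 ≤ R) :
    IntegrableOn (fun r => r * (uf uh r / r) ^ 2) (Ioo 1 R) := by
  have hsub : Ioo (1:ℝ) R ⊆ Ioi 0 := fun r hr => lt_trans one_pos hr.1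
  refine (int_outerDen_Ioo hW hR).mono' ?_ ?_
  · have hc : ContinuousOn (fun r => r * (uf uh r / r) ^ 2) (Ioi 0) :=
      continuousOn_id.mul (((contOn_uf hW.1).div continuousOn_id
        (fun r hr => ne_of_gt hr)).pow 2)
    exact aesm_of_contOn hc hsub
  · filter_upwards [ae_restrict_mem measurableSet_Ioo] with r hr
    have hr0 : (0:ℝ) < r := lt_trans one_pos hr.1
    rw [Real.norm_eq_abs, abs_of_nonneg (by positivity), outerDen_eq]
    nlinarith [mul_nonneg hr0.le (sq_nonneg (pf wh uh' r)), mul_nonneg hr0.le (sq_nonneg (wh' r))]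

lemma psi_sq_int (hψ : IsCutoff ψ) : IntegrableOn (fun r => ψ r ^ 2 / r) (Ioo 0 1) := by
  obtain ⟨ε, hε, h0⟩ := hψ.2.1
  obtain ⟨M, hM⟩ := isCompact_Icc.exists_bound_of_continuousOn
    (hψ.1.continuous.continuousOn : ContinuousOn ψ (Icc 0 1))
  have hM0 : 0 ≤ M := le_trans (norm_nonneg _) (hM 0 ⟨le_refl 0, zero_le_one⟩)
  have hconst : IntegrableOn (fun _ : ℝ => M ^ 2 / ε) (Ioo (0:ℝ) 1) volume :=
    integrableOn_const measure_Ioo_lt_top.ne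
  refine hconst.mono' ?_ ?_
  · exact ((hψ.1.continuous.aemeasurable.pow_const 2).div aemeasurable_id).aestronglyMeasurable
  · filter_upwards [ae_restrict_mem measurableSet_Ioo] with r hr
    rcases le_or_gt r ε with h | h
    · rw [h0 r h]
      simp [Real.norm_eq_abs]
      positivity
    · have hr0 : (0:ℝ) < r := hr.1
      have hb : |ψ r| ≤ M := hM r ⟨hr0.le, hr.2.le⟩
      rw [Real.norm_eq_abs, abs_of_nonneg (by positivity)]
      have h1 : ψ r ^ 2 ≤ M ^ 2 := by nlinarith [abs_nonneg (ψ r), sq_abs (ψ r)]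
      have h2 : ψ r ^ 2 / r ≤ M ^ 2 / r := by gcongr
      have h3 : M ^ 2 / r ≤ M ^ 2 / ε := by gcongr
      linarith

lemma f_int_01 (hψ : IsCutoff ψ) (hW : MemW uh wh uh' wh') :
    IntegrableOn (fun r => r * (rhoEl uh wh uh' wh' r - ψ r ^ 2 / r ^ 2)) (Ioo 0 1) := by
  refine ((hW.2.2.2.sub (psi_sq_int hψ)).congr ?_)
  filter_upwards [ae_restrict_mem measurableSet_Ioo] with r hr
  have hr0 : r ≠ 0 := ne_of_gt hr.1
  rw [Pi.sub_apply]
  field_simp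

lemma f_eq_outer (hψ : IsCutoff ψ) {r : ℝ} (hr : 1 ≤ r) :
    r * (rhoEl uh wh uh' wh' r - ψ r ^ 2 / r ^ 2)
      = outerDen uh wh uh' wh' r - phid uh uh' r := by
  rw [hψ.2.2 r hr]
  exact key_alg uh wh uh' wh' (by positivity)

lemma int_f_Ioo1R (hψ : IsCutoff ψ) (hW : MemW uh wh uh' wh') {R : ℝ} (hR : 1 ≤ R) :
    IntegrableOn (fun r => r * (rhoEl uh wh uh' wh' r - ψ r ^ 2 / r ^ 2)) (Ioo 1 R) := by
  refine ((int_outerDen_Ioo hW hR).sub (int_phid_Ioo hW one_pos)).congr ?_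
  filter_upwards [ae_restrict_mem measurableSet_Ioo] with r hr
  exact (f_eq_outer hψ hr.1.le).symm

lemma phid_integral (hW : MemW uh wh uh' wh') {R : ℝ} (hR : 1 ≤ R) :
    ∫ r in Ioo 1 R, phid uh uh' r = phi uh R - phi uh 1 := by
  have h1 : ∫ r in Ioo 1 R, phid uh uh' r = ∫ r in (1:ℝ)..R, phid uh uh' r := by
    rw [intervalIntegral.integral_of_le hR, integral_Ioc_eq_integral_Ioo]
  rw [h1]
  refine intervalIntegral.integral_eq_sub_of_hasDerivAt ?_ ?_
  · intro x hx
    rw [uIcc_of_le hR] at hx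
    have hx0 : (0:ℝ) < x := lt_of_lt_of_le one_pos hx.1
    exact hasDerivAt_phi hx0 (hW.1 x hx0)
  · rw [intervalIntegrable_iff_integrableOn_Ioc_of_le hR]
    exact (int_phid_Ioo hW (by norm_num : (0:ℝ) < 1/2)).mono_set
      (fun r hr => ⟨by linarith [hr.1], lt_of_le_of_lt hr.2 (lt_add_one R)⟩)

lemma ERen_split (hψ : IsCutoff ψ) (hW : MemW uh wh uh' wh') {R : ℝ} (hR : 1 ≤ R) :
    ERen ψ uh wh uh' wh' R
      = ((∫ r in Ioo 0 1, r * (rhoEl uh wh uh' wh' r - ψ r ^ 2 / r ^ 2))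
          + phi uh 1)
        + ((∫ r in Ioo 1 R, outerDen uh wh uh' wh' r) - phi uh R) := by
  set f : ℝ → ℝ := fun r => r * (rhoEl uh wh uh' wh' r - ψ r ^ 2 / r ^ 2) with hf
  have hint1 : IntegrableOn f (Ioc 0 1) :=
    (integrableOn_Ioc_iff_integrableOn_Ioo).2 (f_int_01 hψ hW)
  have hint2 : IntegrableOn f (Ioc 1 R) :=
    (integrableOn_Ioc_iff_integrableOn_Ioo).2 (int_f_Ioo1R hψ hW hR)
  have hsplit : ERen ψ uh wh uh' wh' R = (∫ r in Ioo 0 1, f r) + ∫ r in Ioo 1 R, f r := by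
    rw [ERen]
    calc ∫ r in Ioo 0 R, f r = ∫ r in Ioc 0 R, f r := integral_Ioc_eq_integral_Ioo.symm
      _ = (∫ r in Ioc 0 1, f r) + ∫ r in Ioc 1 R, f r := by
          rw [← Ioc_union_Ioc_eq_Ioc (zero_le_one) hR]
          exact setIntegral_union (Set.Ioc_disjoint_Ioc_of_le le_rfl) measurableSet_Ioc hint1 hint2
      _ = (∫ r in Ioo 0 1, f r) + ∫ r in Ioo 1 R, f r := by
          rw [integral_Ioc_eq_integral_Ioo, integral_Ioc_eq_integral_Ioo]
  have hcongr : ∫ r in Ioo 1 R, f r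
      = (∫ r in Ioo 1 R, outerDen uh wh uh' wh' r) - ∫ r in Ioo 1 R, phid uh uh' r := by
    rw [← integral_sub (int_outerDen_Ioo hW hR) (int_phid_Ioo hW one_pos)]
    refine setIntegral_congr_ae measurableSet_Ioo ?_
    filter_upwards with r hr
    exact f_eq_outer hψ hr.1.le
  rw [hsplit, hcongr, phid_integral hW hR]
  ring
end Chunk4

section Chunk5a
variable {uh wh uh' wh' : ℝ → ℝ}

lemma int_sq_w (hW : MemW uh wh uh' wh') {a b : ℝ} (ha : 0 < a) :
    IntegrableOn (fun r => wh' r ^ 2) (Ioo a b) := by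
  refine (hW.2.2.1 a b ha).mono' ?_ ?_
  · have := aesm_uh' hW.2.1 (s := Ioo a b) (fun r hr => lt_trans ha hr.1)
    exact (this.mul this).congr (by filter_upwards with r; simp [Pi.mul_apply, sq])
  · filter_upwards [ae_restrict_mem measurableSet_Ioo] with r _
    have := sq_nonneg (uh' r)
    simp only [Real.norm_eq_abs, abs_of_nonneg (sq_nonneg (wh' r))]
    nlinarith

lemma int_abs_w (hW : MemW uh wh uh' wh') {a b : ℝ} (ha : 0 < a) :
    IntegrableOn wh' (Ioo a b) := by
  have hbound : IntegrableOn (fun r => (uh' r ^ 2 + wh' r ^ 2 + 1) / 2) (Ioo a b) := by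
    refine Integrable.div_const ?_ 2
    exact (hW.2.2.1 a b ha).add (integrableOn_const measure_Ioo_lt_top.ne)
  refine hbound.mono' (aesm_uh' hW.2.1 (fun r hr => lt_trans ha hr.1)) ?_
  filter_upwards [ae_restrict_mem measurableSet_Ioo] with r _
  have h1 := sq_nonneg (|wh' r| - 1)
  have h2 := sq_nonneg (uh' r)
  rw [Real.norm_eq_abs]
  have : wh' r ^ 2 = |wh' r| ^ 2 := (sq_abs _).symm
  nlinarith [abs_nonneg (wh' r)]

lemma ii_wh' (hW : MemW uh wh uh' wh') {a b : ℝ} (ha : 0 < a) (hab : a ≤ b) :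
    IntervalIntegrable wh' volume a b := by
  rw [intervalIntegrable_iff_integrableOn_Ioc_of_le hab]
  exact (int_abs_w hW (show 0 < a / 2 by linarith)).mono_set
    (fun r hr => ⟨by linarith [hr.1], lt_of_le_of_lt hr.2 (lt_add_one b)⟩)

lemma ii_uh'2 (hW : MemW uh wh uh' wh') {a b : ℝ} (ha : 0 < a) (hab : a ≤ b) :
    IntervalIntegrable uh' volume a b := by
  rw [intervalIntegrable_iff_integrableOn_Ioc_of_le hab]
  exact (int_abs hW.2.2.1 hW.1 (show 0 < a / 2 by linarith)).mono_set
    (fun r hr => ⟨by linarith [hr.1], lt_of_le_of_lt hr.2 (lt_add_one b)⟩)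

/-- integrability of the three nonnegative parts of `outerDen` on `Ioi 1`. -/
lemma int_rw2_Ioi (hW : MemW uh wh uh' wh')
    (hI : IntegrableOn (outerDen uh wh uh' wh') (Ioi 1)) :
    IntegrableOn (fun r => r * wh' r ^ 2) (Ioi 1) := by
  have hsub : Ioi (1:ℝ) ⊆ Ioi 0 := Ioi_subset_Ioi zero_le_one
  refine hI.mono' ?_ ?_
  · obtain ⟨hu, hw, hu', hw'⟩ := aem_of_memW hW hsub
    exact ((aemeasurable_id.mul (hw'.pow_const 2))).aestronglyMeasurable
  · filter_upwards [ae_restrict_mem measurableSet_Ioi] with r hr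
    have hr0 : (0:ℝ) < r := lt_trans one_pos hr
    rw [Real.norm_eq_abs, abs_of_nonneg (by positivity), outerDen_eq]
    nlinarith [mul_nonneg hr0.le (sq_nonneg (pf wh uh' r)),
      mul_nonneg hr0.le (sq_nonneg (uf uh r / r))]

lemma int_ru2_Ioi (hW : MemW uh wh uh' wh')
    (hI : IntegrableOn (outerDen uh wh uh' wh') (Ioi 1)) :
    IntegrableOn (fun r => r * (uf uh r / r) ^ 2) (Ioi 1) := by
  have hsub : Ioi (1:ℝ) ⊆ Ioi 0 := Ioi_subset_Ioi zero_le_one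
  refine hI.mono' ?_ ?_
  · exact aesm_of_contOn (continuousOn_id.mul (((contOn_uf hW.1).div continuousOn_id
      (fun r hr => ne_of_gt hr)).pow 2)) hsub
  · filter_upwards [ae_restrict_mem measurableSet_Ioi] with r hr
    have hr0 : (0:ℝ) < r := lt_trans one_pos hr
    rw [Real.norm_eq_abs, abs_of_nonneg (by positivity), outerDen_eq]
    nlinarith [mul_nonneg hr0.le (sq_nonneg (pf wh uh' r)),
      mul_nonneg hr0.le (sq_nonneg (wh' r))]

lemma int_rpf2_Ioi (hW : MemW uh wh uh' wh')
    (hI : IntegrableOn (outerDen uh wh uh' wh') (Ioi 1)) :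
    IntegrableOn (fun r => r * pf wh uh' r ^ 2) (Ioi 1) := by
  have hsub : Ioi (1:ℝ) ⊆ Ioi 0 := Ioi_subset_Ioi zero_le_one
  refine hI.mono' ?_ ?_
  · obtain ⟨hu, hw, hu', hw'⟩ := aem_of_memW hW hsub
    have hid : AEMeasurable (fun r : ℝ => r) (volume.restrict (Ioi 1)) := aemeasurable_id
    have t2 : AEMeasurable (pf wh uh') (volume.restrict (Ioi 1)) :=
      (((hw.pow_const 2).sub aemeasurable_const).add hu').add
        (aemeasurable_const.div (aemeasurable_const.mul (hid.pow_const 2)))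
    exact (hid.mul (t2.pow_const 2)).aestronglyMeasurable
  · filter_upwards [ae_restrict_mem measurableSet_Ioi] with r hr
    have hr0 : (0:ℝ) < r := lt_trans one_pos hr
    rw [Real.norm_eq_abs, abs_of_nonneg (by positivity), outerDen_eq]
    nlinarith [mul_nonneg hr0.le (sq_nonneg (uf uh r / r)),
      mul_nonneg hr0.le (sq_nonneg (wh' r))]

/-- pointwise AM-GM: `|v| ≤ (s v² + 1/s)/2`. -/
lemma abs_le_halfsum (v : ℝ → ℝ) {s : ℝ} (hs : 0 < s) :
    |v s| ≤ (s * v s ^ 2 + 1 / s) / 2 := by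
  have key : 2 * s * |v s| ≤ s ^ 2 * v s ^ 2 + 1 := by
    nlinarith [sq_nonneg (s * |v s| - 1), sq_abs (v s), abs_nonneg (v s), hs.le]
  have heq : (s * v s ^ 2 + 1 / s) / 2 - |v s|
      = (s ^ 2 * v s ^ 2 + 1 - 2 * s * |v s|) / (2 * s) := by
    field_simp
  have : 0 ≤ (s * v s ^ 2 + 1 / s) / 2 - |v s| := by
    rw [heq]; exact div_nonneg (by linarith) (by positivity)
  linarith

/-- integral AM-GM bound: `∫_c^d |v| ≤ (∫_c^d s v² + log(d/c))/2`. -/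
lemma int_abs_le_halfsum {v : ℝ → ℝ} {c d : ℝ} (hc : 0 < c) (hcd : c ≤ d)
    (hv : IntervalIntegrable v volume c d)
    (hsv : IntervalIntegrable (fun s => s * v s ^ 2) volume c d) :
    ∫ s in c..d, |v s| ≤ ((∫ s in c..d, s * v s ^ 2) + Real.log (d / c)) / 2 := by
  have h1s : IntervalIntegrable (fun s : ℝ => 1 / s) volume c d := by
    apply ContinuousOn.intervalIntegrable
    apply ContinuousOn.div continuousOn_const continuousOn_id
    intro x hx
    rw [uIcc_of_le hcd] at hx
    exact ne_of_gt (lt_of_lt_of_le hc hx.1)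
  have hmono : ∫ s in c..d, |v s| ≤ ∫ s in c..d, (s * v s ^ 2 + 1 / s) / 2 := by
    refine intervalIntegral.integral_mono_on hcd hv.abs ((hsv.add h1s).div_const 2) ?_
    intro x hx
    exact abs_le_halfsum v (lt_of_lt_of_le hc hx.1)
  have heq : ∫ s in c..d, (s * v s ^ 2 + 1 / s) / 2
      = ((∫ s in c..d, s * v s ^ 2) + ∫ s in c..d, 1 / s) / 2 := by
    rw [intervalIntegral.integral_div, intervalIntegral.integral_add hsv h1s]
  have hlog : ∫ s in c..d, 1 / s = Real.log (d / c) := by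
    refine integral_one_div ?_
    intro h
    rw [uIcc_of_le hcd] at h
    exact absurd h.1 (by linarith)
  rw [heq, hlog] at hmono
  exact hmono

lemma int_svsq_Ioc (hW : MemW uh wh uh' wh') {c d : ℝ} (hc : 0 < c) (hcd : c ≤ d) :
    IntervalIntegrable (fun s => s * wh' s ^ 2) volume c d := by
  rw [intervalIntegrable_iff_integrableOn_Ioc_of_le hcd]
  have hsq : IntegrableOn (fun r => wh' r ^ 2) (Ioc c d) :=
    (int_sq_w hW (show 0 < c / 2 by linarith)).mono_set
      (fun r hr => ⟨by linarith [hr.1], lt_of_le_of_lt hr.2 (lt_add_one d)⟩)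
  refine (hsq.const_mul d).mono' ?_ ?_
  · exact aemeasurable_id.mul
      ((aesm_uh' hW.2.1 (fun r (hr : r ∈ Ioc c d) => lt_trans hc hr.1)).aemeasurable.pow_const 2)
      |>.aestronglyMeasurable
  · filter_upwards [ae_restrict_mem measurableSet_Ioc] with r hr
    have hr0 : (0:ℝ) < r := lt_trans hc hr.1
    rw [Real.norm_eq_abs, abs_of_nonneg (by positivity)]
    nlinarith [sq_nonneg (wh' r), hr.2]

/-- the log-growth bound for `wh` under finite outer energy. -/
lemma wbound (hW : MemW uh wh uh' wh')
    (hI : IntegrableOn (outerDen uh wh uh' wh') (Ioi 1)) {r : ℝ} (hr : 1 ≤ r) :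
    |wh r| ≤ (|wh 1| + (∫ s in Ioi 1, s * wh' s ^ 2) / 2) + Real.log r := by
  set Ew := ∫ s in Ioi 1, s * wh' s ^ 2 with hEw
  have hlog0 : 0 ≤ Real.log r := Real.log_nonneg hr
  have hftc : wh r - wh 1 = ∫ s in (1:ℝ)..r, wh' s := by
    refine (intervalIntegral.integral_eq_sub_of_hasDerivAt ?_ (ii_wh' hW one_pos hr)).symm
    intro x hx
    rw [uIcc_of_le hr] at hx
    exact hW.2.1 x (lt_of_lt_of_le one_pos hx.1)
  have habs : |∫ s in (1:ℝ)..r, wh' s| ≤ ∫ s in (1:ℝ)..r, |wh' s| :=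
    intervalIntegral.abs_integral_le_integral_abs hr
  have hhalf := int_abs_le_halfsum one_pos hr (ii_wh' hW one_pos hr) (int_svsq_Ioc hW one_pos hr)
  have hEwle : ∫ s in (1:ℝ)..r, s * wh' s ^ 2 ≤ Ew := by
    rw [intervalIntegral.integral_of_le hr, integral_Ioc_eq_integral_Ioo]
    refine setIntegral_mono_set (int_rw2_Ioi hW hI) ?_ ?_
    · filter_upwards [ae_restrict_mem measurableSet_Ioi] with s hs
      have : (0:ℝ) < s := lt_trans one_pos hs
      positivity
    · exact HasSubset.Subset.eventuallyLE (fun x hx => hx.1)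
  have hlogr : Real.log (r / 1) = Real.log r := by norm_num
  rw [hlogr] at hhalf
  have : |wh r - wh 1| ≤ (Ew + Real.log r) / 2 := by
    rw [hftc]; exact le_trans habs (by linarith)
  have htri := abs_sub_abs_le_abs_sub (wh r) (wh 1)
  have hEw0 : 0 ≤ Ew := by
    refine setIntegral_nonneg measurableSet_Ioi ?_
    intro s hs
    have : (0:ℝ) < s := lt_trans one_pos hs
    positivity
  linarith [abs_nonneg (wh r - wh 1)]
end Chunk5a

section Chunk5b
variable {uh wh uh' wh' : ℝ → ℝ}

lemma log_pow4_le {r : ℝ} (hr : 1 ≤ r) : Real.log r ^ 4 ≤ 256 * r := by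
  have hr0 : (0:ℝ) < r := lt_of_lt_of_le one_pos hr
  have h1 : Real.log r = 4 * Real.log (r ^ (1/4 : ℝ)) := by
    rw [Real.log_rpow hr0]; ring
  have h2 : Real.log (r ^ (1/4 : ℝ)) ≤ r ^ (1/4 : ℝ) := by
    have := Real.log_le_sub_one_of_pos (Real.rpow_pos_of_pos hr0 (1/4 : ℝ))
    linarith
  have h3 : (0:ℝ) ≤ Real.log r := Real.log_nonneg hr
  have h4 : (r ^ (1/4 : ℝ)) ^ (4:ℕ) = r := by
    rw [← Real.rpow_natCast (r ^ (1/4 : ℝ)) 4, ← Real.rpow_mul hr0.le]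
    norm_num
  have h5 : Real.log r ≤ 4 * r ^ (1/4 : ℝ) := by
    rw [h1]; have := Real.rpow_nonneg hr0.le (1/4 : ℝ); linarith
  calc Real.log r ^ 4 ≤ (4 * r ^ (1/4 : ℝ)) ^ 4 := by
        exact pow_le_pow_left₀ h3 h5 4
    _ = 256 * (r ^ (1/4 : ℝ)) ^ (4:ℕ) := by ring
    _ = 256 * r := by rw [h4]

/-- under the log-growth bound on `wh`, `(ŵ²−1)²` grows at most linearly. -/
lemma hsq_bound {K r : ℝ} (hK : 0 ≤ K) (hr : 1 ≤ r)
    (habs : |wh r| ≤ K + Real.log r) :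
    (wh r ^ 2 - 1) ^ 2 ≤ (16 * K ^ 4 + 4098) * r := by
  set L := Real.log r with hL
  have hL0 : 0 ≤ L := Real.log_nonneg hr
  have hL4 : L ^ 4 ≤ 256 * r := log_pow4_le hr
  have hB : wh r ^ 2 ≤ (K + L) ^ 2 := by
    nlinarith [sq_abs (wh r), abs_nonneg (wh r)]
  have h0B : (0:ℝ) ≤ wh r ^ 2 := sq_nonneg _
  have h1 : (wh r ^ 2 - 1) ^ 2 ≤ ((K + L) ^ 2 + 1) ^ 2 := by
    nlinarith [sq_nonneg (K + L)]
  have h2 : ((K + L) ^ 2 + 1) ^ 2 ≤ 2 * (K + L) ^ 4 + 2 := by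
    nlinarith [sq_nonneg ((K + L) ^ 2 - 1)]
  have key1 : (K + L) ^ 2 ≤ 2 * (K ^ 2 + L ^ 2) := by nlinarith [sq_nonneg (K - L)]
  have h3 : (K + L) ^ 4 ≤ 8 * (K ^ 4 + L ^ 4) := by
    nlinarith [mul_self_le_mul_self (sq_nonneg (K + L)) key1, sq_nonneg (K ^ 2 - L ^ 2),
      sq_nonneg (K + L)]
  nlinarith [hL4, h1, h2, h3,
    mul_nonneg (by positivity : (0:ℝ) ≤ 16 * K ^ 4) (by linarith : (0:ℝ) ≤ r - 1), hr]

noncomputable def gfun (uh : ℝ → ℝ) (r : ℝ) : ℝ := (uf uh r / r) ^ 2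

noncomputable def gd (uh uh' : ℝ → ℝ) (r : ℝ) : ℝ :=
  2 * (uf uh r / r) * (((uh' r + 1 / (2 * r ^ 2)) * r - uf uh r * 1) / r ^ 2)

lemma hasDerivAt_gfun {r : ℝ} (hr : 0 < r) (hd : HasDerivAt uh (uh' r) r) :
    HasDerivAt (gfun uh) (gd uh uh' r) r := by
  have h1 : HasDerivAt (fun s => uf uh s / s)
      (((uh' r + 1 / (2 * r ^ 2)) * r - uf uh r * 1) / r ^ 2) r :=
    (hasDerivAt_uf hr hd).div (hasDerivAt_id r) hr.ne'
  have := h1.pow 2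
  refine this.congr_deriv ?_
  rw [gd]
  push_cast
  ring

lemma gd_bound {Ch r : ℝ} (hr : 1 ≤ r) (hCh : 0 ≤ Ch)
    (hH : (wh r ^ 2 - 1) ^ 2 ≤ Ch * r) :
    |gd uh uh' r| ≤ 4 * (r * (uf uh r / r) ^ 2) + r * pf wh uh' r ^ 2 + Ch / r ^ 2 := by
  have hr0 : (0:ℝ) < r := lt_of_lt_of_le one_pos hr
  have hr3 : (0:ℝ) < r ^ 3 := by positivity
  have hexp : gd uh uh' r * r ^ 3
      = 2 * uf uh r * pf wh uh' r * r - 2 * uf uh r * (wh r ^ 2 - 1) * r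
        - 2 * uf uh r ^ 2 := by
    rw [gd, pf]; field_simp; ring
  have hmexp : (4 * (r * (uf uh r / r) ^ 2) + r * pf wh uh' r ^ 2 + Ch / r ^ 2) * r ^ 3
      = 4 * uf uh r ^ 2 * r ^ 2 + pf wh uh' r ^ 2 * r ^ 4 + Ch * r := by
    field_simp
  have hr21 : (0:ℝ) ≤ r ^ 2 - 1 := by nlinarith
  have hub : gd uh uh' r * r ^ 3
      ≤ (4 * (r * (uf uh r / r) ^ 2) + r * pf wh uh' r ^ 2 + Ch / r ^ 2) * r ^ 3 := by
    rw [hexp, hmexp]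
    nlinarith [sq_nonneg (uf uh r - pf wh uh' r * r), sq_nonneg (uf uh r * r + (wh r ^ 2 - 1)),
      mul_nonneg hr21 (sq_nonneg (uf uh r)), mul_nonneg hr21 (sq_nonneg (pf wh uh' r * r)),
      sq_nonneg (uf uh r)]
  have hlb : -((4 * (r * (uf uh r / r) ^ 2) + r * pf wh uh' r ^ 2 + Ch / r ^ 2) * r ^ 3)
      ≤ gd uh uh' r * r ^ 3 := by
    rw [hexp, hmexp]
    nlinarith [sq_nonneg (uf uh r + pf wh uh' r * r), sq_nonneg (uf uh r * r - (wh r ^ 2 - 1)),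
      mul_nonneg hr21 (sq_nonneg (uf uh r)), mul_nonneg hr21 (sq_nonneg (pf wh uh' r * r)),
      sq_nonneg (uf uh r)]
  rw [abs_le]
  constructor
  · have := hlb
    nlinarith [hr3]
  · exact le_of_mul_le_mul_right (by linarith) hr3

lemma int_invsq_Ioi : IntegrableOn (fun r : ℝ => 1 / r ^ 2) (Ioi 1) := by
  have h := (integrableOn_Ioi_rpow_iff one_pos).2 (by norm_num : (-2:ℝ) < -1)
  refine h.congr_fun ?_ measurableSet_Ioi
  intro x hx
  have hx0 : (0:ℝ) < x := lt_trans one_pos hx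
  show x ^ ((-2):ℝ) = 1 / x ^ 2
  rw [Real.rpow_neg hx0.le, show ((2:ℝ)) = ((2:ℕ):ℝ) by norm_num, Real.rpow_natCast, one_div]

/-- the crucial limit: under finite outer energy the boundary term `φ(R)` tends to `0`. -/
lemma phi_tendsto (hW : MemW uh wh uh' wh')
    (hI : IntegrableOn (outerDen uh wh uh' wh') (Ioi 1)) :
    Tendsto (phi uh) atTop (nhds 0) := by
  classical
  set Ew := ∫ s in Ioi 1, s * wh' s ^ 2 with hEwdef
  have hEw0 : 0 ≤ Ew := by
    refine setIntegral_nonneg measurableSet_Ioi fun s hs => ?_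
    have : (0:ℝ) < s := lt_trans one_pos hs
    positivity
  set K := |wh 1| + Ew / 2 with hKdef
  have hK0 : 0 ≤ K := by positivity
  set Ch := 16 * K ^ 4 + 4098 with hChdef
  have hCh0 : (0:ℝ) ≤ Ch := by positivity
  have hHbound : ∀ r : ℝ, 1 ≤ r → (wh r ^ 2 - 1) ^ 2 ≤ Ch * r := fun r hr =>
    hsq_bound hK0 hr (wbound hW hI hr)
  -- the dominating function
  have hm : IntegrableOn (fun r => 4 * (r * (uf uh r / r) ^ 2) + r * pf wh uh' r ^ 2
      + Ch / r ^ 2) (Ioi 1) := by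
    refine (((int_ru2_Ioi hW hI).const_mul 4).add (int_rpf2_Ioi hW hI)).add ?_
    exact (int_invsq_Ioi.const_mul Ch).congr (by filter_upwards with r; ring)
  -- gd is integrable on Ioi 1
  have hsub : Ioi (1:ℝ) ⊆ Ioi 0 := Ioi_subset_Ioi zero_le_one
  have haesm_gd : AEStronglyMeasurable (gd uh uh') (volume.restrict (Ioi 1)) := by
    obtain ⟨hu, hw, hu', hw'⟩ := aem_of_memW hW hsub
    have hid : AEMeasurable (fun r : ℝ => r) (volume.restrict (Ioi 1)) := aemeasurable_id
    have huf : AEMeasurable (uf uh) (volume.restrict (Ioi 1)) :=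
      (aesm_of_contOn (contOn_uf hW.1) hsub).aemeasurable
    have t1 : AEMeasurable (fun r => uh' r + 1 / (2 * r ^ 2)) (volume.restrict (Ioi 1)) :=
      hu'.add (aemeasurable_const.div (aemeasurable_const.mul (hid.pow_const 2)))
    exact ((aemeasurable_const.mul (huf.div hid)).mul
      (((t1.mul hid).sub (huf.mul aemeasurable_const)).div (hid.pow_const 2))).aestronglyMeasurable
  have hgd_int : IntegrableOn (gd uh uh') (Ioi 1) := by
    refine hm.mono' haesm_gd ?_
    filter_upwards [ae_restrict_mem measurableSet_Ioi] with r hr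
    exact gd_bound hr.le hCh0 (hHbound r hr.le)
  -- FTC and convergence of gfun
  have hftc : ∀ R : ℝ, 1 ≤ R → gfun uh R = gfun uh 1 + ∫ s in (1:ℝ)..R, gd uh uh' s := by
    intro R hR
    have : ∫ s in (1:ℝ)..R, gd uh uh' s = gfun uh R - gfun uh 1 := by
      refine intervalIntegral.integral_eq_sub_of_hasDerivAt ?_ ?_
      · intro x hx
        rw [uIcc_of_le hR] at hx
        have hx0 : (0:ℝ) < x := lt_of_lt_of_le one_pos hx.1
        exact hasDerivAt_gfun hx0 (hW.1 x hx0)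
      · rw [intervalIntegrable_iff_integrableOn_Ioc_of_le hR]
        exact hgd_int.mono_set (fun r hr => hr.1)
    linarith [this]
  have hglim : Tendsto (gfun uh) atTop
      (nhds (gfun uh 1 + ∫ s in Ioi 1, gd uh uh' s)) := by
    have h1 : Tendsto (fun R : ℝ => ∫ s in (1:ℝ)..R, gd uh uh' s) atTop
        (nhds (∫ s in Ioi 1, gd uh uh' s)) :=
      intervalIntegral_tendsto_integral_Ioi 1 hgd_int tendsto_id
    refine ((tendsto_const_nhds.add h1)).congr' ?_
    filter_upwards [eventually_ge_atTop (1:ℝ)] with R hR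
    exact (hftc R hR).symm
  set l := gfun uh 1 + ∫ s in Ioi 1, gd uh uh' s with hldef
  have hl0 : 0 ≤ l := ge_of_tendsto' hglim (fun R => sq_nonneg _)
  have hlzero : l = 0 := by
    by_contra hne
    have hlpos : 0 < l := lt_of_le_of_ne hl0 (Ne.symm hne)
    have hev : ∀ᶠ R in atTop, l / 2 < gfun uh R :=
      hglim.eventually (eventually_gt_nhds (by linarith))
    obtain ⟨R₀, hR₀⟩ := ((hev.and (eventually_ge_atTop (1:ℝ))).exists_forall_of_atTop)
    set R₁ := max R₀ 1 with hR₁def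
    have hR₁1 : (1:ℝ) ≤ R₁ := le_max_right _ _
    have hR₁0 : (0:ℝ) < R₁ := lt_of_lt_of_le one_pos hR₁1
    have hIu : IntegrableOn (fun r => r * (uf uh r / r) ^ 2) (Ioi R₁) :=
      (int_ru2_Ioi hW hI).mono_set (Ioi_subset_Ioi hR₁1)
    have hconst : Integrable (fun _ : ℝ => R₁ * (l / 2)) (volume.restrict (Ioi R₁)) := by
      refine hIu.mono' aestronglyMeasurable_const ?_
      filter_upwards [ae_restrict_mem measurableSet_Ioi] with r hr
      have hrR₁ : R₁ < r := hr
      have hr1 : (1:ℝ) ≤ r := le_trans hR₁1 hrR₁.le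
      have hgt : l / 2 < gfun uh r := (hR₀ r (le_trans (le_max_left _ _) hrR₁.le)).1
      have hr0 : (0:ℝ) < r := lt_of_lt_of_le one_pos hr1
      rw [Real.norm_eq_abs, abs_of_nonneg (by positivity)]
      calc R₁ * (l / 2) ≤ r * (l / 2) :=
            mul_le_mul_of_nonneg_right hrR₁.le (by linarith)
        _ ≤ r * gfun uh r := mul_le_mul_of_nonneg_left hgt.le hr0.le
        _ = r * (uf uh r / r) ^ 2 := by rw [gfun]
    rw [integrable_const_iff] at hconst
    rcases hconst with h | h
    · have hpos : 0 < R₁ * (l / 2) := by positivity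
      exact hpos.ne' h
    · replace h := h.measure_univ_lt_top
      rw [Measure.restrict_apply_univ, Real.volume_Ioi] at h
      exact absurd h (lt_irrefl ⊤)
  have hg0 : Tendsto (gfun uh) atTop (nhds 0) := hlzero ▸ hglim
  have habs : Tendsto (fun R => |uf uh R / R|) atTop (nhds 0) := by
    have hs : Tendsto (fun R => Real.sqrt (gfun uh R)) atTop (nhds (Real.sqrt 0)) :=
      (Real.continuous_sqrt.tendsto 0).comp hg0
    rw [Real.sqrt_zero] at hs
    refine hs.congr fun R => ?_
    rw [gfun, Real.sqrt_sq_eq_abs]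
  have hufr : Tendsto (fun R => uf uh R / R) atTop (nhds 0) := by
    have hneg : Tendsto (fun R => -|uf uh R / R|) atTop (nhds 0) := by
      simpa using habs.neg
    exact tendsto_of_tendsto_of_tendsto_of_le_of_le hneg habs
      (fun x => neg_abs_le _) (fun x => le_abs_self _)
  have h4 : Tendsto (fun R : ℝ => 1 / (4 * R ^ 2)) atTop (nhds 0) := by
    apply Tendsto.div_atTop (tendsto_const_nhds)
    exact Tendsto.const_mul_atTop (by norm_num) (tendsto_pow_atTop (two_ne_zero))
  have hsum := hufr.add h4
  rw [add_zero] at hsum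
  refine hsum.congr' ?_
  filter_upwards [eventually_ge_atTop (1:ℝ)] with R hR
  have hR0 : (0:ℝ) < R := lt_of_lt_of_le one_pos hR
  simp only [phi, uf]
  field_simp
  ring
end Chunk5b

section Chunk6
variable {ψ uh wh uh' wh' : ℝ → ℝ}

noncomputable def FF (uh wh uh' wh' : ℝ → ℝ) (R : ℝ) : ℝ :=
  ∫ r in Ioo 1 R, outerDen uh wh uh' wh' r

lemma FF_nonneg (R : ℝ) : 0 ≤ FF uh wh uh' wh' R := by
  refine setIntegral_nonneg measurableSet_Ioo fun r hr => ?_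
  exact outerDen_nonneg uh wh uh' wh' (lt_trans one_pos hr.1).le

lemma FF_mono (hW : MemW uh wh uh' wh') : Monotone (FF uh wh uh' wh') := by
  intro R R' hRR'
  rcases le_or_gt R' 1 with h | h
  · have h1 : Ioo (1:ℝ) R = ∅ := Ioo_eq_empty (by intro hc; linarith)
    have h2 : Ioo (1:ℝ) R' = ∅ := Ioo_eq_empty (by intro hc; linarith)
    rw [FF, FF, h1, h2]
  · refine setIntegral_mono_set (int_outerDen_Ioo hW h.le) ?_ ?_
    · filter_upwards [ae_restrict_mem measurableSet_Ioo] with r hr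
      exact outerDen_nonneg uh wh uh' wh' (lt_trans one_pos hr.1).le
    · exact HasSubset.Subset.eventuallyLE (Ioo_subset_Ioo_right hRR')

lemma FF_tendsto_atTop (hW : MemW uh wh uh' wh')
    (hnI : ¬ IntegrableOn (outerDen uh wh uh' wh') (Ioi 1)) :
    Tendsto (FF uh wh uh' wh') atTop atTop := by
  refine (FF_mono hW).tendsto_atTop_atTop ?_
  by_contra h
  push_neg at h
  obtain ⟨C, hC⟩ := h
  apply hnI
  have hIoc : ∀ R : ℝ, IntegrableOn (outerDen uh wh uh' wh') (Ioc 1 R) := by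
    intro R
    rcases le_or_gt R 1 with h1 | h1
    · rw [Ioc_eq_empty (fun hc => absurd h1 (not_le.2 hc))]
      exact integrableOn_empty
    · exact (integrableOn_Ioc_iff_integrableOn_Ioo).2 (int_outerDen_Ioo hW h1.le)
  refine integrableOn_Ioi_of_intervalIntegral_norm_bounded C 1 hIoc
    (tendsto_id (α := ℝ)) ?_
  filter_upwards [eventually_ge_atTop (1:ℝ)] with R hR
  have heq : ∫ x in (1:ℝ)..R, ‖outerDen uh wh uh' wh' x‖ = FF uh wh uh' wh' R := by
    rw [intervalIntegral.integral_of_le hR, integral_Ioc_eq_integral_Ioo, FF]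
    refine setIntegral_congr_ae measurableSet_Ioo ?_
    filter_upwards with r hr
    exact Real.norm_of_nonneg (outerDen_nonneg uh wh uh' wh' (lt_trans one_pos hr.1).le)
  rw [heq]
  exact (hC R).le

lemma rufsq_le_outerDen {r : ℝ} (hr : 0 < r) :
    r * (uf uh r / r) ^ 2 ≤ outerDen uh wh uh' wh' r := by
  rw [outerDen_eq]
  nlinarith [mul_nonneg hr.le (sq_nonneg (pf wh uh' r)), mul_nonneg hr.le (sq_nonneg (wh' r))]

lemma exists_good (hW : MemW uh wh uh' wh') {R : ℝ} (hR : 2 ≤ R) :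
    ∃ b ∈ Icc (R/2) R, uf uh b ^ 2 ≤ 2 * (FF uh wh uh' wh' R + 1) := by
  set F := FF uh wh uh' wh' R with hF
  have hF0 : 0 ≤ F := FF_nonneg R
  have hR1 : (1:ℝ) ≤ R := by linarith
  have hR21 : (1:ℝ) ≤ R / 2 := by linarith
  have hR0 : (0:ℝ) < R := by linarith
  by_contra hcon
  push_neg at hcon
  have hsub : Ioo (R/2) R ⊆ Ioo 1 R := fun r hr => ⟨lt_of_lt_of_le hr.1 (le_refl _) |>.trans_le' hR21, hr.2⟩
  have hint1 : IntegrableOn (fun r => r * (uf uh r / r) ^ 2) (Ioo (R/2) R) :=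
    (int_ru2_Ioo hW hR1).mono_set hsub
  have hintO : IntegrableOn (outerDen uh wh uh' wh') (Ioo (R/2) R) :=
    (int_outerDen_Ioo hW hR1).mono_set hsub
  have hlow : ∫ _r in Ioo (R/2) R, (2 * (F + 1) / R)
      ≤ ∫ r in Ioo (R/2) R, r * (uf uh r / r) ^ 2 := by
    refine setIntegral_mono_on (integrableOn_const measure_Ioo_lt_top.ne) hint1
      measurableSet_Ioo ?_
    intro r hr
    have hr0 : (0:ℝ) < r := lt_of_lt_of_le one_pos (le_trans hR21 hr.1.le)
    have hgt : 2 * (F + 1) < uf uh r ^ 2 := hcon r ⟨hr.1.le, hr.2.le⟩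
    have heq : r * (uf uh r / r) ^ 2 = uf uh r ^ 2 / r := by field_simp
    rw [heq]
    have h1 : uf uh r ^ 2 / R ≤ uf uh r ^ 2 / r :=
      div_le_div_of_nonneg_left (sq_nonneg _) hr0 hr.2.le
    have h2 : 2 * (F + 1) / R ≤ uf uh r ^ 2 / R := (div_le_div_iff_of_pos_right hR0).2 hgt.le
    linarith
  have hconst : ∫ _r in Ioo (R/2) R, (2 * (F + 1) / R) = F + 1 := by
    rw [setIntegral_const, measureReal_def, Real.volume_Ioo, ENNReal.toReal_ofReal (by linarith), smul_eq_mul]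
    field_simp
    ring
  have hmid : ∫ r in Ioo (R/2) R, r * (uf uh r / r) ^ 2
      ≤ ∫ r in Ioo (R/2) R, outerDen uh wh uh' wh' r := by
    refine setIntegral_mono_on hint1 hintO measurableSet_Ioo ?_
    intro r hr
    exact rufsq_le_outerDen (lt_of_lt_of_le one_pos (le_trans hR21 hr.1.le))
  have hup : ∫ r in Ioo (R/2) R, outerDen uh wh uh' wh' r ≤ F := by
    refine setIntegral_mono_set (int_outerDen_Ioo hW hR1) ?_
      (HasSubset.Subset.eventuallyLE hsub)
    filter_upwards [ae_restrict_mem measurableSet_Ioo] with r hr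
    exact outerDen_nonneg uh wh uh' wh' (lt_trans one_pos hr.1).le
  rw [hconst] at hlow
  linarith

lemma uf_le (hW : MemW uh wh uh' wh') {R : ℝ} (hR : 2 ≤ R) :
    uf uh R ≤ Real.sqrt (2 * (FF uh wh uh' wh' R + 1))
      + (FF uh wh uh' wh' R + Real.log 2) / 2 + R / 2 := by
  set F := FF uh wh uh' wh' R with hFdef
  have hF0 : 0 ≤ F := FF_nonneg R
  obtain ⟨b, hb, hb2⟩ := exists_good hW hR
  have hbR : b ≤ R := hb.2
  have hb1 : (1:ℝ) ≤ b := le_trans (by linarith) hb.1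
  have hb0 : (0:ℝ) < b := by linarith
  have hR1 : (1:ℝ) ≤ R := by linarith
  have habs_b : |uf uh b| ≤ Real.sqrt (2 * (F + 1)) := by
    rw [← Real.sqrt_sq_eq_abs]
    exact Real.sqrt_le_sqrt hb2
  have hftc : uf uh R - uf uh b = ∫ s in b..R, (uh' s + 1 / (2 * s ^ 2)) := by
    refine (intervalIntegral.integral_eq_sub_of_hasDerivAt ?_ ?_).symm
    · intro x hx
      rw [uIcc_of_le hbR] at hx
      have hx0 : (0:ℝ) < x := lt_of_lt_of_le hb0 hx.1
      exact hasDerivAt_uf hx0 (hW.1 x hx0)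
    · refine (ii_uh'2 hW hb0 hbR).add ?_
      apply ContinuousOn.intervalIntegrable
      refine continuousOn_const.div (by fun_prop) ?_
      intro x hx
      rw [uIcc_of_le hbR] at hx
      have : (0:ℝ) < x := lt_of_lt_of_le hb0 hx.1
      positivity
  have hii_pf : IntervalIntegrable (pf wh uh') volume b R := by
    rw [intervalIntegrable_iff_integrableOn_Ioc_of_le hbR]
    have hcq : IntegrableOn (cq wh) (Ioc b R) := by
      refine (((contOn_cq hW.2.1 : ContinuousOn (cq wh) (Ioi 0)).mono
        (?_ : Icc b R ⊆ Ioi 0)).integrableOn_Icc).mono_set Ioc_subset_Icc_self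
      exact fun x hx => lt_of_lt_of_le hb0 hx.1
    have huh' : IntegrableOn uh' (Ioc b R) :=
      (int_abs hW.2.2.1 hW.1 (show 0 < b/2 by linarith)).mono_set
        (fun r hr => ⟨by linarith [hr.1], lt_of_le_of_lt hr.2 (lt_add_one R)⟩)
    refine (hcq.add huh').congr ?_
    filter_upwards with x
    simp [Pi.add_apply, ← pf_eq]
  have hii_h : IntervalIntegrable (fun s => wh s ^ 2 - 1) volume b R := by
    apply ContinuousOn.intervalIntegrable
    rw [uIcc_of_le hbR]
    refine (((contOn_uh hW.2.1).pow 2).sub continuousOn_const).mono ?_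
    exact fun x hx => lt_of_lt_of_le hb0 hx.1
  have hsplit : ∫ s in b..R, (uh' s + 1 / (2 * s ^ 2))
      = (∫ s in b..R, pf wh uh' s) - ∫ s in b..R, (wh s ^ 2 - 1) := by
    rw [← intervalIntegral.integral_sub hii_pf hii_h]
    apply intervalIntegral.integral_congr
    intro x _
    show uh' x + 1 / (2 * x ^ 2) = pf wh uh' x - (wh x ^ 2 - 1)
    simp only [pf]; ring
  have hii_spf2 : IntervalIntegrable (fun s => s * pf wh uh' s ^ 2) volume b R := by
    rw [intervalIntegrable_iff_integrableOn_Ioc_of_le hbR]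
    exact (int_rpf2_Ioo hW (show (1:ℝ) ≤ R + 1 by linarith)).mono_set
      (fun r hr => ⟨lt_of_le_of_lt hb1 hr.1, lt_of_le_of_lt hr.2 (lt_add_one R)⟩)
  have h1 : ∫ s in b..R, pf wh uh' s
      ≤ ((∫ s in b..R, s * pf wh uh' s ^ 2) + Real.log (R / b)) / 2 := by
    have ha := int_abs_le_halfsum hb0 hbR hii_pf hii_spf2
    have hb' : ∫ s in b..R, pf wh uh' s ≤ ∫ s in b..R, |pf wh uh' s| := by
      refine intervalIntegral.integral_mono_on hbR hii_pf hii_pf.abs ?_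
      intro x _; exact le_abs_self _
    linarith
  have hspf_le : ∫ s in b..R, s * pf wh uh' s ^ 2 ≤ F := by
    rw [intervalIntegral.integral_of_le hbR, integral_Ioc_eq_integral_Ioo]
    have hsub2 : Ioo b R ⊆ Ioo 1 R := fun r hr => ⟨lt_of_le_of_lt hb1 hr.1, hr.2⟩
    have hint2 : IntegrableOn (fun s => s * pf wh uh' s ^ 2) (Ioo b R) :=
      (int_rpf2_Ioo hW hR1).mono_set hsub2
    have hintO2 : IntegrableOn (outerDen uh wh uh' wh') (Ioo b R) :=
      (int_outerDen_Ioo hW hR1).mono_set hsub2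
    have step1 : ∫ s in Ioo b R, s * pf wh uh' s ^ 2
        ≤ ∫ s in Ioo b R, outerDen uh wh uh' wh' s := by
      refine setIntegral_mono_on hint2 hintO2 measurableSet_Ioo ?_
      intro r hr
      have hr0 : (0:ℝ) < r := lt_of_lt_of_le hb0 hr.1.le
      rw [outerDen_eq]
      nlinarith [mul_nonneg hr0.le (sq_nonneg (uf uh r / r)), mul_nonneg hr0.le (sq_nonneg (wh' r))]
    have step2 : ∫ s in Ioo b R, outerDen uh wh uh' wh' s ≤ F := by
      refine setIntegral_mono_set (int_outerDen_Ioo hW hR1) ?_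
        (HasSubset.Subset.eventuallyLE hsub2)
      filter_upwards [ae_restrict_mem measurableSet_Ioo] with r hr
      exact outerDen_nonneg uh wh uh' wh' (lt_trans one_pos hr.1).le
    linarith
  have hlog : Real.log (R / b) ≤ Real.log 2 := by
    have hRb : R / b ≤ 2 := by rw [div_le_iff₀ hb0]; linarith [hb.1]
    have hpos : (0:ℝ) < R / b := by positivity
    exact Real.log_le_log hpos hRb
  have h2 : -(R - b) ≤ ∫ s in b..R, (wh s ^ 2 - 1) := by
    have hmono := intervalIntegral.integral_mono_on hbR (intervalIntegrable_const
      (c := (-1 : ℝ))) hii_h (fun x _ => by nlinarith [sq_nonneg (wh x)])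
    rw [intervalIntegral.integral_const, smul_eq_mul] at hmono
    linarith
  have hRb2 : R - b ≤ R / 2 := by linarith [hb.1]
  have := le_abs_self (uf uh b)
  linarith
end Chunk6

section Chunk7
variable {ψ uh wh uh' wh' : ℝ → ℝ}

lemma sqrt_le_quarter_add_one {y : ℝ} (hy : 0 ≤ y) : Real.sqrt y ≤ y / 4 + 1 := by
  nlinarith [Real.sq_sqrt hy, Real.sqrt_nonneg y, sq_nonneg (Real.sqrt y - 2)]

lemma ERen_lower (hψ : IsCutoff ψ) (hW : MemW uh wh uh' wh') {R : ℝ} (hR : 2 ≤ R) :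
    ((∫ r in Ioo 0 1, r * (rhoEl uh wh uh' wh' r - ψ r ^ 2 / r ^ 2)) + phi uh 1)
      + FF uh wh uh' wh' R / 2 - 5 / 2 ≤ ERen ψ uh wh uh' wh' R := by
  have hR1 : (1:ℝ) ≤ R := by linarith
  have hR0 : (0:ℝ) < R := by linarith
  rw [ERen_split hψ hW hR1]
  set F := FF uh wh uh' wh' R with hFdef
  have hF0 : 0 ≤ F := FF_nonneg R
  have hFF : (∫ r in Ioo 1 R, outerDen uh wh uh' wh' r) = F := rfl
  rw [hFF]
  -- it suffices that `phi uh R ≤ F/2 + 5/2`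
  have hphi : phi uh R = uf uh R / R + 1 / (4 * R ^ 2) := by
    simp only [phi, uf]
    field_simp
    ring
  have hq : 1 / (4 * R ^ 2) ≤ 1 := by
    rw [div_le_one (by positivity)]; nlinarith
  have hsq : Real.sqrt (2 * (F + 1)) ≤ F / 2 + 3 / 2 := by
    have := sqrt_le_quarter_add_one (show (0:ℝ) ≤ 2 * (F + 1) by linarith)
    linarith
  have hufle := uf_le hW hR
  rw [← hFdef] at hufle
  have hlog0 : (0:ℝ) ≤ Real.log 2 := Real.log_nonneg (by norm_num)
  have hlog2 : Real.log 2 ≤ 1 := by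
    have := Real.log_le_sub_one_of_pos (by norm_num : (0:ℝ) < 2); linarith
  have hdiv : uf uh R / R ≤ (Real.sqrt (2 * (F + 1)) + (F + Real.log 2) / 2 + R / 2) / R :=
    (div_le_div_iff_of_pos_right hR0).2 hufle
  have hT : (Real.sqrt (2 * (F + 1)) + (F + Real.log 2) / 2 + R / 2) / R
      = Real.sqrt (2 * (F + 1)) / R + (F + Real.log 2) / (2 * R) + 1 / 2 := by
    field_simp
  have t1 : Real.sqrt (2 * (F + 1)) / R ≤ Real.sqrt (2 * (F + 1)) / 2 :=
    div_le_div_of_nonneg_left (Real.sqrt_nonneg _) (by norm_num) hR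
  have t2 : (F + Real.log 2) / (2 * R) ≤ (F + Real.log 2) / 4 :=
    div_le_div_of_nonneg_left (by linarith) (by norm_num) (by linarith)
  have huf_div : uf uh R / R ≤ F / 2 + 3 / 2 := by
    rw [hT] at hdiv
    nlinarith [t1, t2, hsq, hdiv]
  have hphile : phi uh R ≤ F / 2 + 5 / 2 := by
    rw [hphi]; linarith
  linarith
end Chunk7

end St9

open St9 in
/-- for every `(û, ŵ) ∈ 𝒲` the limit `E(u, w) = lim_{R→∞} E^R(u, w)` exists
in `ℝ ∪ {+∞}` (viewed inside `EReal`), and it is finite iff `E⁺(u, w) < ∞`. -/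
theorem stmt9 (ψ : ℝ → ℝ) (hψ : IsCutoff ψ)
    (uh wh uh' wh' : ℝ → ℝ) (hW : MemW uh wh uh' wh') :
    ∃ L : EReal, L ≠ ⊥ ∧
      Tendsto (fun R => ((ERen ψ uh wh uh' wh' R : ℝ) : EReal)) atTop (nhds L) ∧
      (L < ⊤ ↔ EPlusTop uh wh uh' wh' < ⊤) := by
  have hsub : Ioi (1:ℝ) ⊆ Ioi 0 := Ioi_subset_Ioi zero_le_one
  set C0 : ℝ := (∫ r in Ioo 0 1, r * (rhoEl uh wh uh' wh' r - ψ r ^ 2 / r ^ 2))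
    + phi uh 1 with hC0
  have hEP : EPlusTop uh wh uh' wh' < ⊤
      ↔ (∫⁻ r in Ioi 1, ENNReal.ofReal (outerDen uh wh uh' wh' r)) < ⊤ := by
    rw [EPlusTop, ENNReal.add_lt_top]
    exact ⟨fun h => h.2, fun h => ⟨ENNReal.ofReal_lt_top, h⟩⟩
  have hcongr : (∫⁻ r in Ioi 1, (‖outerDen uh wh uh' wh' r‖₊ : ℝ≥0∞))
      = ∫⁻ r in Ioi 1, ENNReal.ofReal (outerDen uh wh uh' wh' r) := by
    refine lintegral_congr_ae ?_
    filter_upwards [ae_restrict_mem measurableSet_Ioi] with r hr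
    rw [← Real.enorm_eq_ofReal (outerDen_nonneg uh wh uh' wh' (lt_trans one_pos hr).le)]
    exact (enorm_eq_nnnorm _).symm
  by_cases hfin : (∫⁻ r in Ioi 1, ENNReal.ofReal (outerDen uh wh uh' wh' r)) < ⊤
  · -- finite outer energy
    have hI : IntegrableOn (outerDen uh wh uh' wh') (Ioi 1) := by
      refine ⟨aesm_outerDen hW hsub, ?_⟩
      show (∫⁻ r in Ioi 1, (‖outerDen uh wh uh' wh' r‖₊ : ℝ≥0∞)) < ⊤
      rw [hcongr]
      exact hfin
    have hItendsto : Tendsto (FF uh wh uh' wh') atTop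
        (nhds (∫ r in Ioi 1, outerDen uh wh uh' wh' r)) := by
      have h1 := intervalIntegral_tendsto_integral_Ioi 1 hI (tendsto_id (α := ℝ))
      refine h1.congr' ?_
      filter_upwards [eventually_ge_atTop (1:ℝ)] with R hR
      simp only [FF, id_eq]
      rw [intervalIntegral.integral_of_le hR, integral_Ioc_eq_integral_Ioo]
    have hphi0 := phi_tendsto hW hI
    have hlim : Tendsto (ERen ψ uh wh uh' wh') atTop
        (nhds (C0 + ((∫ r in Ioi 1, outerDen uh wh uh' wh' r) - 0))) := by
      refine (tendsto_const_nhds.add (hItendsto.sub hphi0)).congr' ?_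
      filter_upwards [eventually_ge_atTop (1:ℝ)] with R hR
      rw [ERen_split hψ hW hR, ← hC0]
      rfl
    rw [sub_zero] at hlim
    refine ⟨((C0 + ∫ r in Ioi 1, outerDen uh wh uh' wh' r : ℝ) : EReal), ?_, ?_, ?_⟩
    · exact EReal.coe_ne_bot _
    · exact EReal.tendsto_coe.2 hlim
    · exact ⟨fun _ => hEP.2 hfin, fun _ => EReal.coe_lt_top _⟩
  · -- infinite outer energy
    have hnI : ¬ IntegrableOn (outerDen uh wh uh' wh') (Ioi 1) := by
      intro h
      exact hfin (hcongr ▸ h.2)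
    have hFFtop := FF_tendsto_atTop hW hnI
    have hERtop : Tendsto (fun R => ERen ψ uh wh uh' wh' R) atTop atTop := by
      have h1 : Tendsto (fun R => FF uh wh uh' wh' R / 2 + (C0 - 5 / 2)) atTop atTop :=
        tendsto_atTop_add_const_right _ _ (hFFtop.atTop_div_const (by norm_num))
      refine tendsto_atTop_mono' atTop ?_ h1
      filter_upwards [eventually_ge_atTop (2:ℝ)] with R hR
      have hlow := ERen_lower hψ hW hR
      rw [← hC0] at hlow
      linarith
    refine ⟨⊤, ?_, ?_, ?_⟩
    · simp
    · rw [EReal.tendsto_nhds_top_iff_real]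
      intro x
      filter_upwards [hERtop.eventually_ge_atTop (x + 1)] with R hR
      exact EReal.coe_lt_coe_iff.2 (lt_of_lt_of_le (by linarith) hR)
    · exact ⟨fun h => absurd h (lt_irrefl _), fun h => absurd (hEP.1 h) hfin⟩
end

section
/- If (û, ŵ) ∈ 𝒲 and E(u, w) := lim_{R→∞} E^R(u, w) is finite, then E(u, w) = E⁺(u, w) + u(1) + 1/4 − ∫₀¹ r ψ(r)²/r² dr. -/
open MeasureTheory Set Filter

section aux
variable {ψ uh wh uh' wh' : ℝ → ℝ}

lemma aesm_of_deriv (hu : ∀ r ∈ Ioi (0:ℝ), HasDerivAt uh (uh' r) r)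
    {s : Set ℝ} (hs : MeasurableSet s) (hsub : s ⊆ Ioi 0) :
    AEStronglyMeasurable uh' (volume.restrict s) := by
  have h : ∀ᵐ r ∂(volume.restrict s), deriv uh r = uh' r := by
    filter_upwards [ae_restrict_mem hs] with r hr
    exact (hu r (hsub hr)).deriv
  exact ((measurable_deriv uh).aestronglyMeasurable).congr h

lemma int_sq_Ioc (hW : MemW uh wh uh' wh') {a b : ℝ} (ha : 0 < a) :
    IntegrableOn (fun r => uh' r ^ 2 + wh' r ^ 2) (Ioc a b) := by
  have := hW.2.2.1 (a/2) (b+1) (by linarith)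
  exact this.mono_set (fun x hx => ⟨by linarith [hx.1], by linarith [hx.2]⟩)

lemma contOn_uh (hW : MemW uh wh uh' wh') : ContinuousOn uh (Ioi 0) :=
  fun r hr => ((hW.1 r hr).continuousAt).continuousWithinAt

lemma contOn_wh (hW : MemW uh wh uh' wh') : ContinuousOn wh (Ioi 0) :=
  fun r hr => ((hW.2.1 r hr).continuousAt).continuousWithinAt

lemma integrable_form (hW : MemW uh wh uh' wh')
    (c d e : ℝ → ℝ) (hc : ContinuousOn c (Ioi 0)) (hd : ContinuousOn d (Ioi 0))
    (he : ContinuousOn e (Ioi 0)) {a b : ℝ} (ha : 0 < a) :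
    IntegrableOn (fun r => r * ((c r + uh' r) ^ 2 + d r ^ 2 + wh' r ^ 2 + e r)) (Ioc a b) := by
  rcases le_or_gt b a with hba | hab
  · rw [Ioc_eq_empty (by exact fun h => absurd hba (not_le.mpr h))]
    exact integrableOn_empty
  have hb0 : 0 < b := ha.trans hab
  have hIcc : Icc a b ⊆ Ioi (0:ℝ) := fun x hx => lt_of_lt_of_le ha hx.1
  have hsub : Ioc a b ⊆ Icc a b := Ioc_subset_Icc_self
  obtain ⟨Mc, hMc⟩ := isCompact_Icc.exists_bound_of_continuousOn (hc.mono hIcc)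
  obtain ⟨Md, hMd⟩ := isCompact_Icc.exists_bound_of_continuousOn (hd.mono hIcc)
  obtain ⟨Me, hMe⟩ := isCompact_Icc.exists_bound_of_continuousOn (he.mono hIcc)
  have hsq : IntegrableOn (fun r => uh' r ^ 2 + wh' r ^ 2) (Ioc a b) := int_sq_Ioc hW ha
  have hmaj : IntegrableOn
      (fun r => b * (2*Mc^2 + Md^2 + Me + 2*(uh' r ^ 2 + wh' r ^ 2))) (Ioc a b) := by
    apply Integrable.const_mul
    exact (integrableOn_const measure_Ioc_lt_top.ne).add (hsq.const_mul 2)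
  -- measurability
  have hIoc0 : Ioc a b ⊆ Ioi (0:ℝ) := fun x hx => lt_of_lt_of_le ha (le_of_lt hx.1)
  have hmu : AEStronglyMeasurable uh' (volume.restrict (Ioc a b)) :=
    aesm_of_deriv hW.1 measurableSet_Ioc hIoc0
  have hmw : AEStronglyMeasurable wh' (volume.restrict (Ioc a b)) :=
    aesm_of_deriv hW.2.1 measurableSet_Ioc hIoc0
  have hmc : AEStronglyMeasurable c (volume.restrict (Ioc a b)) :=
    (hc.mono hIoc0).aestronglyMeasurable measurableSet_Ioc
  have hmd : AEStronglyMeasurable d (volume.restrict (Ioc a b)) :=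
    (hd.mono hIoc0).aestronglyMeasurable measurableSet_Ioc
  have hme : AEStronglyMeasurable e (volume.restrict (Ioc a b)) :=
    (he.mono hIoc0).aestronglyMeasurable measurableSet_Ioc
  have hmeas : AEStronglyMeasurable
      (fun r => r * ((c r + uh' r) ^ 2 + d r ^ 2 + wh' r ^ 2 + e r))
      (volume.restrict (Ioc a b)) := by
    exact (aestronglyMeasurable_id).mul
      (((((hmc.add hmu).pow 2).add (hmd.pow 2)).add (hmw.pow 2)).add hme)
  refine hmaj.mono' hmeas ?_
  filter_upwards [ae_restrict_mem measurableSet_Ioc] with r hr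
  have hr0 : 0 < r := lt_of_lt_of_le ha (le_of_lt hr.1)
  have hrb : r ≤ b := hr.2
  have hcr := hMc r (hsub hr); have hdr := hMd r (hsub hr); have her := hMe r (hsub hr)
  rw [Real.norm_eq_abs] at hcr hdr her ⊢
  obtain ⟨hc1, hc2⟩ := abs_le.mp hcr
  obtain ⟨hd1, hd2⟩ := abs_le.mp hdr
  obtain ⟨he1, he2⟩ := abs_le.mp her
  have hY : |(c r + uh' r) ^ 2 + d r ^ 2 + wh' r ^ 2 + e r|
      ≤ 2*Mc^2 + Md^2 + Me + 2*(uh' r ^ 2 + wh' r ^ 2) := by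
    rw [abs_le]
    constructor
    · nlinarith [sq_nonneg (c r + uh' r), sq_nonneg (d r), sq_nonneg (wh' r), sq_nonneg (uh' r)]
    · nlinarith [sq_nonneg (c r - uh' r), sq_nonneg (wh' r), sq_nonneg (uh' r)]
  rw [abs_mul, abs_of_pos hr0]
  calc r * |(c r + uh' r) ^ 2 + d r ^ 2 + wh' r ^ 2 + e r|
      ≤ b * (2*Mc^2 + Md^2 + Me + 2*(uh' r ^ 2 + wh' r ^ 2)) :=
        mul_le_mul hrb hY (abs_nonneg _) (le_of_lt hb0)
    _ = _ := rfl


lemma integrable_rho (hW : MemW uh wh uh' wh') {a b : ℝ} (ha : 0 < a) :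
    IntegrableOn (fun r => r * rhoEl uh wh uh' wh' r) (Ioc a b) := by
  have hne : ∀ r ∈ Ioi (0:ℝ), r ≠ 0 := fun r hr => ne_of_gt hr
  have hc : ContinuousOn (fun r => wh r ^ 2 - 1) (Ioi 0) :=
    ((contOn_wh hW).pow 2).sub continuousOn_const
  have hd : ContinuousOn (fun r => uh r / r) (Ioi 0) :=
    (contOn_uh hW).div continuousOn_id hne
  have he : ContinuousOn (fun r => wh r ^ 2 / r ^ 2) (Ioi 0) :=
    ((contOn_wh hW).pow 2).div (continuousOn_id.pow 2) (fun r hr => pow_ne_zero _ (hne r hr))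
  exact integrable_form hW _ _ _ hc hd he ha

lemma integrable_outer (hW : MemW uh wh uh' wh') {a b : ℝ} (ha : 0 < a) :
    IntegrableOn (outerDen uh wh uh' wh') (Ioc a b) := by
  have hne : ∀ r ∈ Ioi (0:ℝ), r ≠ 0 := fun r hr => ne_of_gt hr
  have hc : ContinuousOn (fun r => wh r ^ 2 - 1 + 1 / (2 * r ^ 2)) (Ioi 0) := by
    refine (((contOn_wh hW).pow 2).sub continuousOn_const).add
      (continuousOn_const.div (continuousOn_const.mul (continuousOn_id.pow 2))
        (fun r hr => by have h0 : (0:ℝ) < r := hr; positivity))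
  have hd : ContinuousOn (fun r => (uh r - 1 / (2 * r)) / r) (Ioi 0) := by
    refine ((contOn_uh hW).sub (continuousOn_const.div
      (continuousOn_const.mul continuousOn_id)
      (fun r hr => mul_ne_zero two_ne_zero (ne_of_gt (show (0:ℝ) < r from hr))))).div
      continuousOn_id hne
  have h := integrable_form hW (b := b) _ _ (fun _ => (0:ℝ)) hc hd continuousOn_const ha
  exact h.congr_fun (fun x hx => by simp only [outerDen]; ring) measurableSet_Ioc

-- The FTC derivative identity
lemma deriv_g (hW : MemW uh wh uh' wh') {x : ℝ} (hx : 0 < x) :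
    HasDerivAt (fun r => uh r / r - 1 / (4 * r ^ 2))
      (uh' x / x - uh x / x ^ 2 + 1 / (2 * x ^ 3)) x := by
  have hx0 : x ≠ 0 := ne_of_gt hx
  have h1 : HasDerivAt (fun r => uh r / r) ((uh' x * x - uh x * 1) / x ^ 2) x :=
    (hW.1 x hx).div (hasDerivAt_id x) hx0
  have h4 : HasDerivAt (fun r : ℝ => 4 * r ^ 2) (4 * (2 * x ^ 1)) x := by
    simpa using ((hasDerivAt_pow 2 x).const_mul 4)
  have h2 : HasDerivAt (fun r => 1 / (4 * r ^ 2))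
      ((0 * (4 * x ^ 2) - 1 * (4 * (2 * x ^ 1))) / (4 * x ^ 2) ^ 2) x :=
    (hasDerivAt_const x 1).div h4 (by positivity)
  have : HasDerivAt (fun r => uh r / r - 1 / (4 * r ^ 2))
      ((uh' x * x - uh x * 1) / x ^ 2 - (0 * (4 * x ^ 2) - 1 * (4 * (2 * x ^ 1))) / (4 * x ^ 2) ^ 2) x :=
    h1.sub h2
  convert this using 1
  field_simp
  ring

-- pointwise algebraic identity
lemma alg_id {x : ℝ} (hx : 0 < x) (uhx whx uhx' whx' : ℝ) :
    x * ((whx ^ 2 - 1 + uhx' + 1 / (2 * x ^ 2)) ^ 2 + ((uhx - 1 / (2 * x)) / x) ^ 2 + whx' ^ 2)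
      - (x * ((whx ^ 2 - 1 + uhx') ^ 2 + (uhx / x) ^ 2 + whx' ^ 2 + whx ^ 2 / x ^ 2) - 1 / x)
    = uhx' / x - uhx / x ^ 2 + 1 / (2 * x ^ 3) := by
  field_simp
  ring


lemma integrable_psi (hψ : IsCutoff ψ) :
    IntegrableOn (fun r => r * (ψ r ^ 2 / r ^ 2)) (Ioo 0 1) := by
  obtain ⟨hsm, ⟨ε, hε, hε0⟩, _⟩ := hψ
  obtain ⟨C, hC⟩ := (isCompact_Icc (a := (0:ℝ)) (b := 1)).exists_bound_of_continuousOn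
    (hsm.continuous.continuousOn)
  have hC0 : 0 ≤ C := (norm_nonneg _).trans (hC 0 ⟨le_refl _, zero_le_one⟩)
  have hmeas : AEStronglyMeasurable (fun r => r * (ψ r ^ 2 / r ^ 2))
      (volume.restrict (Ioo 0 1)) := by
    refine ContinuousOn.aestronglyMeasurable ?_ measurableSet_Ioo
    exact continuousOn_id.mul (((hsm.continuous.pow 2).continuousOn).div
      (continuousOn_id.pow 2) (fun x hx => pow_ne_zero _ (ne_of_gt hx.1)))
  refine Integrable.mono' (g := fun _ => C ^ 2 / ε)
    (integrableOn_const measure_Ioo_lt_top.ne) hmeas ?_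
  filter_upwards [ae_restrict_mem measurableSet_Ioo] with r hr
  have hr0 : 0 < r := hr.1
  have heq : r * (ψ r ^ 2 / r ^ 2) = ψ r ^ 2 / r := by
    field_simp
  rw [heq, Real.norm_eq_abs]
  rcases le_or_gt r ε with hle | hgt
  · rw [hε0 r hle]; simp; positivity
  · have hψr : |ψ r| ≤ C := by
      have := hC r ⟨le_of_lt hr0, le_of_lt hr.2⟩
      rwa [Real.norm_eq_abs] at this
    have h1 : ψ r ^ 2 ≤ C ^ 2 := by nlinarith [abs_nonneg (ψ r), sq_abs (ψ r)]
    rw [abs_of_nonneg (by positivity)]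
    exact div_le_div₀ (by positivity) h1 hε (le_of_lt hgt)

lemma ERen_eq (hψ : IsCutoff ψ) (hW : MemW uh wh uh' wh') {R : ℝ} (hR : 1 < R) :
    ERen ψ uh wh uh' wh' R =
      ((∫ r in Ioo 0 1, r * rhoEl uh wh uh' wh' r)
        - (∫ r in Ioo 0 1, r * (ψ r ^ 2 / r ^ 2)) + uh 1 - 1/4)
      + (∫ r in Ioo 1 R, outerDen uh wh uh' wh' r) - uh R / R + 1/(4*R^2) := by
  have hpsi1 : ∀ r : ℝ, 1 ≤ r → ψ r = 1 := fun r hr => hψ.2.2 r hr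
  set f := fun r => r * (rhoEl uh wh uh' wh' r - ψ r ^ 2 / r ^ 2) with hf
  -- integrabilities
  have hint_psi := integrable_psi hψ
  have hf01 : IntegrableOn f (Ioo 0 1) := by
    have h := hW.2.2.2.sub hint_psi
    exact IntegrableOn.congr_fun h
      (fun x hx => by simp only [hf, Pi.sub_apply]; ring) measurableSet_Ioo
  have hf01' : IntegrableOn f (Ioc 0 1) := by
    rw [integrableOn_Ioc_iff_integrableOn_Ioo]; exact hf01
  have hinv : IntegrableOn (fun r => 1 / r) (Ioc 1 R) := by
    refine (ContinuousOn.integrableOn_Icc ?_).mono_set Ioc_subset_Icc_self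
    exact continuousOn_const.div continuousOn_id (fun x hx => by
      have : (0:ℝ) < x := lt_of_lt_of_le one_pos hx.1; positivity)
  have hfo : IntegrableOn (fun r => r * rhoEl uh wh uh' wh' r - 1 / r) (Ioc 1 R) :=
    (integrable_rho hW one_pos).sub hinv
  have hfeq : EqOn (fun r => r * rhoEl uh wh uh' wh' r - 1 / r) f (Ioc 1 R) := by
    intro x hx
    have hx0 : (0:ℝ) < x := lt_of_lt_of_le one_pos (le_of_lt hx.1)
    have hx0' : x ≠ 0 := ne_of_gt hx0
    simp only [hf]
    rw [hpsi1 x (le_of_lt hx.1)]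
    field_simp
  have hf1R : IntegrableOn f (Ioc 1 R) := hfo.congr_fun hfeq measurableSet_Ioc
  have hdisj : Disjoint (Ioc (0:ℝ) 1) (Ioo 1 R) := by
    refine Set.disjoint_left.mpr ?_
    intro x hx1 hx2; exact absurd hx2.1 (not_lt.mpr hx1.2)
  have hunion : Ioc (0:ℝ) 1 ∪ Ioo 1 R = Ioo 0 R := Ioc_union_Ioo_eq_Ioo (by norm_num) hR
  have hsplit : ERen ψ uh wh uh' wh' R
      = (∫ r in Ioc 0 1, f r) + ∫ r in Ioo 1 R, f r := by
    rw [ERen, ← hunion,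
      setIntegral_union hdisj measurableSet_Ioo hf01' (hf1R.mono_set Ioo_subset_Ioc_self)]
  have h01 : (∫ r in Ioc 0 1, f r)
      = (∫ r in Ioo 0 1, r * rhoEl uh wh uh' wh' r)
        - ∫ r in Ioo 0 1, r * (ψ r ^ 2 / r ^ 2) := by
    rw [integral_Ioc_eq_integral_Ioo,
      show (∫ r in Ioo 0 1, f r)
        = ∫ r in Ioo 0 1, (r * rhoEl uh wh uh' wh' r - r * (ψ r ^ 2 / r ^ 2)) from
        setIntegral_congr_fun measurableSet_Ioo (fun x hx => by simp only [hf]; ring)]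
    exact integral_sub hW.2.2.2 hint_psi
  set D := fun x => uh' x / x - uh x / x ^ 2 + 1 / (2 * x ^ 3) with hD
  have hDeriv : ∀ x ∈ uIcc (1:ℝ) R,
      HasDerivAt (fun r => uh r / r - 1 / (4 * r ^ 2)) (D x) x := by
    intro x hx
    rw [uIcc_of_le (le_of_lt hR)] at hx
    exact deriv_g hW (lt_of_lt_of_le one_pos hx.1)
  have hcomb : IntegrableOn
      (fun r => outerDen uh wh uh' wh' r - (r * rhoEl uh wh uh' wh' r - 1/r)) (Ioc 1 R) :=
    (integrable_outer hW one_pos).sub hfo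
  have hDeq : EqOn
      (fun r => outerDen uh wh uh' wh' r - (r * rhoEl uh wh uh' wh' r - 1/r)) D (Ioc 1 R) := by
    intro x hx
    have hx0 : (0:ℝ) < x := lt_of_lt_of_le one_pos (le_of_lt hx.1)
    simp only [outerDen, rhoEl, hD]
    exact alg_id hx0 _ _ _ _
  have hDint : IntervalIntegrable D volume 1 R := by
    rw [intervalIntegrable_iff_integrableOn_Ioc_of_le (le_of_lt hR)]
    exact hcomb.congr_fun hDeq measurableSet_Ioc
  have hFTC : ∫ x in (1:ℝ)..R, D x = (uh R / R - 1/(4*R^2)) - (uh 1 - 1/4) := by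
    rw [intervalIntegral.integral_eq_sub_of_hasDerivAt hDeriv hDint]
    norm_num
  have hIval : ∫ r in Ioo 1 R, (outerDen uh wh uh' wh' r - (r * rhoEl uh wh uh' wh' r - 1/r))
      = (uh R / R - 1/(4*R^2)) - (uh 1 - 1/4) := by
    rw [← integral_Ioc_eq_integral_Ioo, setIntegral_congr_fun measurableSet_Ioc hDeq,
      ← intervalIntegral.integral_of_le (le_of_lt hR)]
    exact hFTC
  have hIoo_outer : IntegrableOn (outerDen uh wh uh' wh') (Ioo 1 R) :=
    (integrable_outer hW one_pos).mono_set Ioo_subset_Ioc_self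
  have hIoo_fo : IntegrableOn (fun r => r * rhoEl uh wh uh' wh' r - 1/r) (Ioo 1 R) :=
    hfo.mono_set Ioo_subset_Ioc_self
  have hsub2 : ∫ r in Ioo 1 R, (outerDen uh wh uh' wh' r - (r * rhoEl uh wh uh' wh' r - 1/r))
      = (∫ r in Ioo 1 R, outerDen uh wh uh' wh' r)
        - ∫ r in Ioo 1 R, (r * rhoEl uh wh uh' wh' r - 1/r) :=
    integral_sub hIoo_outer hIoo_fo
  have h1R : ∫ r in Ioo 1 R, f r
      = ∫ r in Ioo 1 R, (r * rhoEl uh wh uh' wh' r - 1/r) :=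
    (setIntegral_congr_fun measurableSet_Ioo
      (fun x hx => hfeq (Ioo_subset_Ioc_self hx))).symm
  rw [hsplit, h01, h1R]
  have hfin := hsub2.symm.trans hIval
  linarith [hfin]


lemma outer_nonneg {r : ℝ} (hr : 0 ≤ r) : 0 ≤ outerDen uh wh uh' wh' r := by
  simp only [outerDen]; positivity

lemma F_mono (hW : MemW uh wh uh' wh') :
    Monotone (fun R => ∫ r in Ioo 1 R, outerDen uh wh uh' wh' r) := by
  intro S T hST
  refine setIntegral_mono_set
    ((integrable_outer hW one_pos).mono_set Ioo_subset_Ioc_self) ?_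
    ((Ioo_subset_Ioo_right hST).eventuallyLE)
  filter_upwards [ae_restrict_mem measurableSet_Ioo] with r hr
  exact outer_nonneg (le_of_lt (lt_trans one_pos hr.1))

lemma F_diff (hW : MemW uh wh uh' wh') {S T : ℝ} (h1S : 1 < S) (hST : S ≤ T) :
    (∫ r in Ioo 1 T, outerDen uh wh uh' wh' r)
      = (∫ r in Ioo 1 S, outerDen uh wh uh' wh' r)
        + ∫ r in Ico S T, outerDen uh wh uh' wh' r := by
  have hS0 : (0:ℝ) < S / 2 := by linarith
  have hIco : IntegrableOn (outerDen uh wh uh' wh') (Ico S T) := by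
    refine (integrable_outer hW hS0 (b := T)).mono_set ?_
    intro x hx; exact ⟨by linarith [hx.1], le_of_lt hx.2⟩
  rw [← Ioo_union_Ico_eq_Ioo h1S hST,
    setIntegral_union (by
      refine Set.disjoint_left.mpr fun x hx1 hx2 => absurd hx2.1 (not_le.mpr hx1.2))
      measurableSet_Ico
      ((integrable_outer hW one_pos).mono_set Ioo_subset_Ioc_self) hIco]

lemma F_lower (hW : MemW uh wh uh' wh') {S T K : ℝ} (h1S : 1 < S) (hST : S ≤ T)
    (hKpt : ∀ r ∈ Ico S T, K ≤ outerDen uh wh uh' wh' r) :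
    (∫ r in Ioo 1 S, outerDen uh wh uh' wh' r) + (T - S) * K
      ≤ ∫ r in Ioo 1 T, outerDen uh wh uh' wh' r := by
  have hS0 : (0:ℝ) < S / 2 := by linarith
  have hIco : IntegrableOn (outerDen uh wh uh' wh') (Ico S T) := by
    refine (integrable_outer hW hS0 (b := T)).mono_set ?_
    intro x hx; exact ⟨by linarith [hx.1], le_of_lt hx.2⟩
  have hmono := setIntegral_mono_on
    (integrableOn_const measure_Ico_lt_top.ne) hIco measurableSet_Ico hKpt
  rw [setIntegral_const, Real.volume_real_Ico_of_le hST, smul_eq_mul]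
    at hmono
  rw [F_diff hW h1S hST]
  linarith

lemma outer_lb {r x : ℝ} (hr : 2 ≤ r) (hx : 1 ≤ x) (hu : r * x ≤ uh r) :
    x ^ 2 / 2 ≤ outerDen uh wh uh' wh' r := by
  have hr0 : 0 < r := by linarith
  have h2 : 1 / (2 * r) ≤ 1 := by
    rw [div_le_one (by linarith)]; linarith
  have h1 : r * x / 2 ≤ uh r - 1 / (2 * r) := by nlinarith
  have h4 : (r * x / 2) ^ 2 ≤ (uh r - 1 / (2 * r)) ^ 2 :=
    pow_le_pow_left₀ (by positivity) h1 2
  have hexp : outerDen uh wh uh' wh' r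
      = r * (wh r ^ 2 - 1 + uh' r + 1 / (2 * r ^ 2)) ^ 2
        + (uh r - 1 / (2 * r)) ^ 2 / r + r * wh' r ^ 2 := by
    simp only [outerDen]; field_simp
  have h6 : (r * x / 2) ^ 2 / r ≤ (uh r - 1 / (2 * r)) ^ 2 / r := by gcongr
  have h7 : (r * x / 2) ^ 2 / r = r * x ^ 2 / 4 := by field_simp; ring
  have h8 : x ^ 2 / 2 ≤ r * x ^ 2 / 4 := by nlinarith [sq_nonneg x]
  have h9 : 0 ≤ r * (wh r ^ 2 - 1 + uh' r + 1 / (2 * r ^ 2)) ^ 2 := by positivity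
  have h10 : 0 ≤ r * wh' r ^ 2 := by positivity
  rw [hexp]
  rw [h7] at h6
  linarith

lemma F_bdd (hW : MemW uh wh uh' wh') (c1 R₂ : ℝ)
    (hev : ∀ R, R₂ ≤ R → (∫ r in Ioo 1 R, outerDen uh wh uh' wh' r) - uh R / R ≤ c1) :
    ∃ C, ∀ R, (∫ r in Ioo 1 R, outerDen uh wh uh' wh' r) ≤ C := by
  by_contra hnb
  push_neg at hnb
  set F := fun R => ∫ r in Ioo 1 R, outerDen uh wh uh' wh' r with hF
  have hFmono : Monotone F := F_mono hW
  obtain ⟨R₃, hR₃⟩ := hnb (c1 + 1)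
  set R₀ := max (max R₂ R₃) 2 with hR₀def
  have hR₀2 : (2:ℝ) ≤ R₀ := le_max_right _ _
  have hφ : ∀ r, R₀ ≤ r → 1 ≤ F r - c1 := by
    intro r hr
    have h := hFmono (((le_max_right R₂ R₃).trans (le_max_left _ 2)).trans hr)
    linarith
  have hG : ∀ r, R₀ ≤ r → F r - c1 ≤ uh r / r := by
    intro r hr
    have := hev r (((le_max_left R₂ R₃).trans (le_max_left _ 2)).trans hr)
    linarith
  have key : ∀ S T : ℝ, R₀ ≤ S → S ≤ T →
      (F S - c1) + (T - S) * ((F S - c1) ^ 2 / 2) ≤ F T - c1 := by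
    intro S T hS hST
    have h1S : (1:ℝ) < S := lt_of_lt_of_le (by norm_num) (hR₀2.trans hS)
    have hpt : ∀ r ∈ Ico S T, (F S - c1) ^ 2 / 2 ≤ outerDen uh wh uh' wh' r := by
      intro r hr
      have hrS : S ≤ r := hr.1
      have hrR₀ : R₀ ≤ r := hS.trans hrS
      have hr2 : (2:ℝ) ≤ r := hR₀2.trans hrR₀
      have hr0 : (0:ℝ) < r := by linarith
      have hx1 : 1 ≤ F S - c1 := hφ S hS
      have hmono2 : F S - c1 ≤ F r - c1 := by
        have := hFmono hrS; simp only [hF] at this ⊢; linarith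
      have hu : r * (F S - c1) ≤ uh r := by
        have h2 := hG r hrR₀
        have h3 : (F r - c1) * r ≤ uh r := by
          have := (le_div_iff₀ hr0).mp h2; linarith
        nlinarith
      exact outer_lb hr2 hx1 hu
    have := F_lower hW h1S hST hpt
    simp only [hF] at this ⊢
    linarith
  have hiter : ∀ n : ℕ, (2:ℝ) ^ n ≤ F (R₀ + 4 - 4 / 2 ^ n) - c1 := by
    intro n
    induction n with
    | zero =>
      have := hφ R₀ le_rfl
      norm_num
      convert this using 2 <;> norm_num
    | succ n ih =>
      have hpow : (0:ℝ) < 2 ^ n := by positivity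
      have h1n : (1:ℝ) ≤ 2 ^ n := one_le_pow₀ one_le_two
      have hS : R₀ ≤ R₀ + 4 - 4 / 2 ^ n := by
        have h1 : (4:ℝ) / 2 ^ n ≤ 4 := by
          rw [div_le_iff₀ hpow]; nlinarith
        linarith
      have hST : R₀ + 4 - 4 / 2 ^ n ≤ R₀ + 4 - 4 / 2 ^ (n + 1) := by
        have h1 : (4:ℝ) / 2 ^ (n + 1) ≤ 4 / 2 ^ n := by
          rw [pow_succ, div_le_div_iff₀ (by positivity) hpow]
          nlinarith
        linarith
      have hk := key _ _ hS hST
      have hTS : (R₀ + 4 - 4 / 2 ^ (n + 1)) - (R₀ + 4 - 4 / 2 ^ n) = 2 / 2 ^ n := by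
        rw [pow_succ]
        field_simp
        ring
      rw [hTS] at hk
      set x := F (R₀ + 4 - 4 / 2 ^ n) - c1 with hxdef
      have hk' : x + x ^ 2 / 2 ^ n ≤ F (R₀ + 4 - 4 / 2 ^ (n + 1)) - c1 := by
        have heq2 : 2 / 2 ^ n * (x ^ 2 / 2) = x ^ 2 / 2 ^ n := by
          field_simp
        linarith [hk, heq2.le, heq2.ge]
      have hxx : (2:ℝ) ^ n ≤ x := ih
      have hsq : (2:ℝ) ^ n ≤ x ^ 2 / 2 ^ n := by
        rw [le_div_iff₀ hpow]
        nlinarith [sq_nonneg (x - 2 ^ n)]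
      calc (2:ℝ) ^ (n + 1) = 2 ^ n + 2 ^ n := by ring
        _ ≤ x + x ^ 2 / 2 ^ n := add_le_add hxx hsq
        _ ≤ F (R₀ + 4 - 4 / 2 ^ (n + 1)) - c1 := hk'
  obtain ⟨n, hn⟩ := pow_unbounded_of_one_lt (F (R₀ + 4) - c1) one_lt_two
  have h0 : (0:ℝ) ≤ 4 / 2 ^ n := by positivity
  have hle : F (R₀ + 4 - 4 / 2 ^ n) ≤ F (R₀ + 4) := hFmono (by linarith)
  have := hiter n
  linarith


lemma outer_lb2 {r K : ℝ} (hr : 0 < r) (hK : K ≤ (uh r - 1 / (2 * r)) ^ 2 / r) :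
    K ≤ outerDen uh wh uh' wh' r := by
  have hexp : outerDen uh wh uh' wh' r
      = r * (wh r ^ 2 - 1 + uh' r + 1 / (2 * r ^ 2)) ^ 2
        + (uh r - 1 / (2 * r)) ^ 2 / r + r * wh' r ^ 2 := by
    simp only [outerDen]; field_simp
  have h9 : 0 ≤ r * (wh r ^ 2 - 1 + uh' r + 1 / (2 * r ^ 2)) ^ 2 := by positivity
  have h10 : 0 ≤ r * wh' r ^ 2 := by positivity
  rw [hexp]; linarith


end aux

/-- if `(û, ŵ) ∈ 𝒲` and `E(u, w) = lim_{R→∞} E^R(u, w)` is finite (i.e. the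
limit exists as a real number `m`), then
`E(u, w) = E⁺(u, w) + u(1) + 1/4 − ∫₀¹ r ψ(r)²/r² dr`, where `u(1) = û(1) − 1/2`. -/
theorem stmt10 (ψ : ℝ → ℝ) (hψ : IsCutoff ψ)
    (uh wh uh' wh' : ℝ → ℝ) (hW : MemW uh wh uh' wh')
    (m : ℝ) (hlim : Tendsto (fun R => ERen ψ uh wh uh' wh' R) atTop (nhds m)) :
    m = ((∫ r in Ioo 0 1, r * rhoEl uh wh uh' wh' r) +
          (∫ r in Ioi 1, outerDen uh wh uh' wh' r)) +
        (uh 1 - 1 / 2) + 1 / 4 - ∫ r in Ioo 0 1, r * (ψ r ^ 2 / r ^ 2) := by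
  set F := fun R => ∫ r in Ioo 1 R, outerDen uh wh uh' wh' r with hFdef
  set G := fun R => uh R / R with hGdef
  set c₀ := (∫ r in Ioo 0 1, r * rhoEl uh wh uh' wh' r)
    - (∫ r in Ioo 0 1, r * (ψ r ^ 2 / r ^ 2)) + uh 1 - 1/4 with hc₀
  -- 1/(4R^2) → 0
  have h4R : Tendsto (fun R : ℝ => 1/(4*R^2)) atTop (nhds 0) := by
    have h1 : Tendsto (fun R : ℝ => 4*R^2) atTop atTop :=
      (tendsto_pow_atTop two_ne_zero).const_mul_atTop (by norm_num)
    have h2 := tendsto_inv_atTop_zero.comp h1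
    refine h2.congr (fun R => ?_)
    simp [Function.comp, one_div]
  -- F - G tends to m - c₀
  have hFG : Tendsto (fun R => F R - G R) atTop (nhds (m - c₀)) := by
    have h1 : Tendsto (fun R => ERen ψ uh wh uh' wh' R - c₀ - 1/(4*R^2)) atTop
        (nhds (m - c₀ - 0)) := (hlim.sub tendsto_const_nhds).sub h4R
    rw [sub_zero] at h1
    refine h1.congr' ?_
    filter_upwards [eventually_gt_atTop (1:ℝ)] with R hR
    rw [ERen_eq hψ hW hR]
    simp only [hFdef, hGdef, hc₀]
    ring
  -- F bounded
  obtain ⟨R₂, hR₂⟩ := eventually_atTop.mp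
    (hFG.eventually (eventually_le_nhds (lt_add_one (m - c₀))))
  obtain ⟨C, hC⟩ := F_bdd hW (m - c₀ + 1) R₂ hR₂
  -- F tends to L
  have hFmono : Monotone F := F_mono hW
  have hbdd : BddAbove (range F) := ⟨C, by rintro _ ⟨R, rfl⟩; exact hC R⟩
  set L := ⨆ R, F R with hL
  have hFL : Tendsto F atTop (nhds L) := tendsto_atTop_ciSup hFmono hbdd
  have hGL : Tendsto G atTop (nhds (L - (m - c₀))) := by
    have := hFL.sub hFG
    refine this.congr (fun R => by ring)
  set g := L - (m - c₀) with hg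
  clear_value g
  have hg0 : g = 0 := by
    by_contra hgne
    have hgabs : 0 < |g| := abs_pos.mpr hgne
    have hev2 := Metric.tendsto_nhds.mp hGL (|g|/2) (by positivity)
    obtain ⟨R₁, hR₁⟩ := eventually_atTop.mp hev2
    set R₄ := max (max R₁ 2) (2/|g|) with hR₄
    have hdiff : Tendsto (fun R => F (R+1) - F R) atTop (nhds 0) := by
      have h2 : Tendsto (fun R => F (R+1)) atTop (nhds L) :=
        hFL.comp (tendsto_atTop_add_const_right atTop 1 tendsto_id)
      simpa using h2.sub hFL
    have hpos : ∀ R, R₄ ≤ R → g^2/16 ≤ F (R+1) - F R := by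
      intro R hR
      have h2R : (2:ℝ) ≤ R := ((le_max_right R₁ 2).trans (le_max_left _ _)).trans hR
      have h1R : (1:ℝ) < R := by linarith
      have hpt : ∀ r ∈ Ico R (R+1), g^2/16 ≤ outerDen uh wh uh' wh' r := by
        intro r hr
        have hrR : R ≤ r := hr.1
        have hr0 : (0:ℝ) < r := by linarith
        have hrR₁ : R₁ ≤ r :=
          (((le_max_left R₁ 2).trans (le_max_left _ _)).trans hR).trans hrR
        have hrg : 2/|g| ≤ r := ((le_max_right _ _).trans hR).trans hrR
        have hGr := hR₁ r hrR₁
        rw [Real.dist_eq] at hGr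
        have hGabs : |g|/2 ≤ |G r| := by
          have h1 := abs_sub_abs_le_abs_sub (g) (G r)
          rw [abs_sub_comm g (G r)] at h1
          linarith [le_of_lt hGr]
        have huabs : r * (|g|/2) ≤ |uh r| := by
          have : |G r| * r ≤ |uh r| := by
            rw [hGdef]
            simp only []
            rw [abs_div, abs_of_pos hr0, div_mul_cancel₀ _ (ne_of_gt hr0)]
          nlinarith
        have hrg2 : 1/2 ≤ r * |g| / 4 := by
          rw [div_le_div_iff₀ (by norm_num) (by norm_num)]
          have := (div_le_iff₀ hgabs).mp hrg
          nlinarith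
        have hu2 : r * |g| / 4 ≤ |uh r - 1/(2*r)| := by
          have h12r : 1/(2*r) ≤ 1/2 := by
            rw [div_le_div_iff₀ (by linarith) (by norm_num)]; linarith
          have h12r0 : 0 < 1/(2*r) := by positivity
          have := abs_sub_abs_le_abs_sub (uh r) (1/(2*r))
          rw [abs_of_pos h12r0] at this
          nlinarith
        have hsq : (r * |g| / 4)^2 ≤ (uh r - 1/(2*r))^2 := by
          have := pow_le_pow_left₀ (by positivity) hu2 2
          rwa [sq_abs] at this
        refine outer_lb2 hr0 ?_
        rw [le_div_iff₀ hr0]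
        have hexp2 : (r * |g| / 4)^2 = r^2 * g^2 / 16 := by
          rw [div_pow, mul_pow, sq_abs]; norm_num
        have hr2 : (2:ℝ) ≤ r := h2R.trans hrR
        nlinarith [sq_nonneg g, hsq, hexp2,
          mul_nonneg (mul_nonneg (sq_nonneg g) hr0.le) (by linarith : (0:ℝ) ≤ r - 1)]
      have := F_lower hW h1R (by linarith : R ≤ R + 1) hpt
      simp only [hFdef] at this ⊢
      linarith
    have hge := ge_of_tendsto hdiff (eventually_atTop.mpr ⟨R₄, hpos⟩)
    have : (0:ℝ) < g^2/16 := by positivity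
    linarith
  -- integral over Ioi 1
  have habs : ∀ᶠ (i:ℝ) in atTop, (∫ x in (1:ℝ)..i, ‖outerDen uh wh uh' wh' x‖) = F i := by
    filter_upwards [eventually_ge_atTop (1:ℝ)] with i hi
    rw [intervalIntegral.integral_of_le hi]
    simp only [hFdef]
    rw [← integral_Ioc_eq_integral_Ioo]
    refine setIntegral_congr_fun measurableSet_Ioc (fun x hx => ?_)
    exact Real.norm_of_nonneg (outer_nonneg (le_of_lt (lt_of_lt_of_le one_pos (le_of_lt hx.1))))
  have hIoi : IntegrableOn (outerDen uh wh uh' wh') (Ioi 1) := by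
    refine integrableOn_Ioi_of_intervalIntegral_norm_tendsto L 1
      (fun i => integrable_outer hW one_pos) tendsto_id ?_
    have habs' : (fun i => ∫ x in (1:ℝ)..i, ‖outerDen uh wh uh' wh' x‖) =ᶠ[atTop] F := habs
    exact hFL.congr' habs'.symm
  have hvals : ∀ᶠ (i:ℝ) in atTop, (∫ x in (1:ℝ)..i, outerDen uh wh uh' wh' x) = F i := by
    filter_upwards [eventually_ge_atTop (1:ℝ)] with i hi
    rw [intervalIntegral.integral_of_le hi]
    simp only [hFdef]
    rw [← integral_Ioc_eq_integral_Ioo]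
  have hIoiVal : (∫ r in Ioi 1, outerDen uh wh uh' wh' r) = L := by
    have hT2 := (intervalIntegral_tendsto_integral_Ioi 1 hIoi tendsto_id).congr' hvals
    exact tendsto_nhds_unique hT2 hFL
  -- conclude
  have hm : m = c₀ + L := by
    have h0 : L - (m - c₀) = 0 := by rw [← hg]; exact hg0
    linarith
  rw [hm, hIoiVal, hc₀]
  ring
end
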